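/- arXiv:2605.19424 — 6 statements merged into one kernel-verified Lean document; each statement's English description precedes it below -/
import Mathlib

section
/- Under the standing setup, if T_f is a t-intersecting family and ℓ = t+1, then τ_t(T_f) = t+1 and T_g is a t-intersecting family. -/
/-- The interval `[a,b] = {a, a+1, …, b}` as a finset of naturals. -/
def Iv (a b : ℕ) : Finset ℕ := Finset.Icc a b

/-- `ksubsets S k` is the family of all `k`-element subsets of `S`. -/
def ksubsets (S : Finset ℕ) (k : ℕ) : Finset (Finset ℕ) :=
  S.powerset.filter (fun F => F.card = k)

/-- Families `F` and `G` are cross `t`-intersecting. -/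
def crossInt (t : ℕ) (F G : Finset (Finset ℕ)) : Prop :=
  ∀ A ∈ F, ∀ B ∈ G, t ≤ (A ∩ B).card

/-- The `t`-covering number of a family of subsets of `[n]`. -/
noncomputable def tau (n t : ℕ) (F : Finset (Finset ℕ)) : ℕ :=
  sInf {c : ℕ | ∃ T : Finset ℕ, T ⊆ Finset.Icc 1 n ∧ T.card = c ∧ ∀ A ∈ F, t ≤ (T ∩ A).card}

/-- The collection of all `t`-covers of `F` of size `t+1`. -/
def covers (n t : ℕ) (F : Finset (Finset ℕ)) : Finset (Finset ℕ) :=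
  (Finset.Icc 1 n).powerset.filter (fun T => T.card = t + 1 ∧ ∀ A ∈ F, t ≤ (T ∩ A).card)

/-- `F ⊆ ksubsets S k` and `G ⊆ ksubsets S l` form a maximal cross `t`-intersecting pair. -/
def maximalCrossIn (S : Finset ℕ) (k l t : ℕ) (F G : Finset (Finset ℕ)) : Prop :=
  F ⊆ ksubsets S k ∧ G ⊆ ksubsets S l ∧ crossInt t F G ∧
  ∀ F' G' : Finset (Finset ℕ), F' ⊆ ksubsets S k → G' ⊆ ksubsets S l →
    crossInt t F' G' → F ⊆ F' → G ⊆ G' → F = F' ∧ G = G'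

/-- Elementwise image of a family under a permutation. -/
def mapFam (σ : Equiv.Perm ℕ) (F : Finset (Finset ℕ)) : Finset (Finset ℕ) :=
  F.image (fun A => A.image σ)

/-- `σ` is a permutation of `[n]` (maps `[n]` into, hence onto, itself). -/
def permOn (n : ℕ) (σ : Equiv.Perm ℕ) : Prop := ∀ x ∈ Finset.Icc 1 n, σ x ∈ Finset.Icc 1 n

/-- The pairs `(F, G)` and `(F', G')` are isomorphic via a permutation of `[n]`. -/
def isoPair (n : ℕ) (F G F' G' : Finset (Finset ℕ)) : Prop :=
  ∃ σ : Equiv.Perm ℕ, permOn n σ ∧ mapFam σ F = F' ∧ mapFam σ G = G'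

/-- `F` and `F'` are isomorphic via a permutation of `[n]`. -/
def isoFam (n : ℕ) (F F' : Finset (Finset ℕ)) : Prop :=
  ∃ σ : Equiv.Perm ℕ, permOn n σ ∧ mapFam σ F = F'

/-- Construction `𝒜(k,t) = {F ∈ C([n],k) : |F ∩ [t+2]| ≥ t+1}`. -/
def famA (n k t : ℕ) : Finset (Finset ℕ) :=
  (ksubsets (Iv 1 n) k).filter (fun F => t + 1 ≤ (F ∩ Iv 1 (t+2)).card)

/-- Construction `𝒞₁(ℓ,t) = {[ℓ+1]\{i} : i ∈ [t+1]} ∪ {G ∈ C([n],ℓ) : [t+1] ⊆ G}`. -/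
def famC1 (n l t : ℕ) : Finset (Finset ℕ) :=
  (Iv 1 (t+1)).image (fun i => (Iv 1 (l+1)).erase i) ∪
  (ksubsets (Iv 1 n) l).filter (fun G => Iv 1 (t+1) ⊆ G)

/-- Construction `𝒞₂(k,t;ℓ)`. -/
def famC2 (n k t l : ℕ) : Finset (Finset ℕ) :=
  (ksubsets (Iv 1 n) k).filter
    (fun F => (F ∩ Iv 1 (t+1)).card = t ∧ 1 ≤ (F ∩ Iv (t+2) (l+1)).card) ∪
  (ksubsets (Iv 1 n) k).filter (fun F => Iv 1 (t+1) ⊆ F)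

/-- Construction `ℋ(k,t;X,Y) = {F ∈ C([n],k) : [t] ⊆ F, |F∩Y| ≥ 1} ∪ {(X∪[t])\{i} : i ∈ [t]}`. -/
def famH (n k t : ℕ) (X Y : Finset ℕ) : Finset (Finset ℕ) :=
  (ksubsets (Iv 1 n) k).filter (fun F => Iv 1 t ⊆ F ∧ 1 ≤ (F ∩ Y).card) ∪
  (Iv 1 t).image (fun i => (X ∪ Iv 1 t).erase i)

/-- Construction `ℬ(k;(a₁,a₂,a₃,a₄))`. -/
def famB (n k a1 a2 a3 a4 : ℕ) : Finset (Finset ℕ) :=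
  (ksubsets (Iv 1 n) k).filter
    (fun F => ({a1, a2} : Finset ℕ) ⊆ F ∨ ({a2, a3} : Finset ℕ) ⊆ F ∨ ({a3, a4} : Finset ℕ) ⊆ F)

/-- Binomial coefficient `C(a,b)` for integers, `0` if `b < 0` or `b > a`. -/
def ch (a b : ℤ) : ℤ := if 0 ≤ b ∧ b ≤ a then (Nat.choose a.toNat b.toNat : ℤ) else 0

/-- `g(m,x,y,t) = m·C(n−t−1,x−t−1) + y(t+1)(y−t+1)·C(n−t−2,x−t−2)`. -/
def gfun (n m x y t : ℤ) : ℤ :=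
  m * ch (n - t - 1) (x - t - 1) + y * (t + 1) * (y - t + 1) * ch (n - t - 2) (x - t - 2)

/-- `a(x,t) = (t+2)·C(n−t−2,x−t−1) + C(n−t−2,x−t−2)`. -/
def afun (n x t : ℤ) : ℤ := (t + 2) * ch (n - t - 2) (x - t - 1) + ch (n - t - 2) (x - t - 2)

/-- `c₁(y,t) = C(n−t−1,y−t−1) + t + 1`. -/
def c1fun (n y t : ℤ) : ℤ := ch (n - t - 1) (y - t - 1) + t + 1

/-- `c₂(x,y,t) = (t+1)(C(n−t−1,x−t) − C(n−y−1,x−t)) + C(n−t−1,x−t−1)`. -/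
def c2fun (n x y t : ℤ) : ℤ :=
  (t + 1) * (ch (n - t - 1) (x - t) - ch (n - y - 1) (x - t)) + ch (n - t - 1) (x - t - 1)

/-- `h(x,y,t) = C(n−t,x−t) − C(n−y−1,x−t) + t`. -/
def hfun (n x y t : ℤ) : ℤ := ch (n - t) (x - t) - ch (n - y - 1) (x - t) + t
/-- Proposition 2.3: if T_f is t-intersecting and ℓ = t+1, then τ_t(T_f) = t+1
and T_g is t-intersecting. -/
theorem prop_l_eq_succ_t
    (n k l t : ℕ) (hn0 : 0 < n) (ht0 : 0 < t) (hk : t + 1 ≤ k) (hl : t + 1 ≤ l)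
    (hn : (t+1)^2 * (k+l)^2 * (k - t + 1) * (l - t + 1) + k + l - t ≤ n)
    (F G : Finset (Finset ℕ))
    (hmax : maximalCrossIn (Iv 1 n) k l t F G)
    (htF : tau n t F = t + 1) (htG : tau n t G = t + 1)
    (hTf : crossInt t (covers n t F) (covers n t F))
    (hl1 : l = t + 1) :
    tau n t (covers n t F) = t + 1 ∧
    crossInt t (covers n t G) (covers n t G) := by
  subst hl1
  obtain ⟨hF, hG, hFG, hmaxmax⟩ := hmax
  have hGmem : ∀ B ∈ G, B ⊆ Finset.Icc 1 n ∧ B.card = t + 1 := by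
    intro B hB
    have := hG hB
    simp only [ksubsets, Iv, Finset.mem_filter, Finset.mem_powerset] at this
    exact this
  -- covers n t F = G
  have hcov : covers n t F = G := by
    apply Finset.Subset.antisymm
    · intro T hT
      simp only [covers, Finset.mem_filter, Finset.mem_powerset] at hT
      obtain ⟨hTsub, hTcard, hTcov⟩ := hT
      have hcross' : crossInt t F (insert T G) := by
        intro A hA B hB
        rcases Finset.mem_insert.mp hB with rfl | hB
        · rw [Finset.inter_comm]; exact hTcov A hA
        · exact hFG A hA B hB
      have hsub' : insert T G ⊆ ksubsets (Iv 1 n) (t + 1) := by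
        intro B hB
        rcases Finset.mem_insert.mp hB with rfl | hB
        · simp only [ksubsets, Iv, Finset.mem_filter, Finset.mem_powerset]
          exact ⟨hTsub, hTcard⟩
        · exact hG hB
      have hEq := (hmaxmax F (insert T G) hF hsub' hcross' (le_refl _)
        (Finset.subset_insert _ _)).2
      rw [hEq]; exact Finset.mem_insert_self _ _
    · intro B hB
      obtain ⟨hBsub, hBcard⟩ := hGmem B hB
      simp only [covers, Finset.mem_filter, Finset.mem_powerset]
      exact ⟨hBsub, hBcard, fun A hA => by
        rw [Finset.inter_comm]; exact hFG A hA B hB⟩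
  refine ⟨by rw [hcov]; exact htG, ?_⟩
  rw [hcov] at hTf
  -- G is nonempty
  have hGne : G.Nonempty := by
    rcases Finset.eq_empty_or_nonempty G with rfl | h
    · exfalso
      have h0 : (0 : ℕ) ∈ {c : ℕ | ∃ T : Finset ℕ, T ⊆ Finset.Icc 1 n ∧ T.card = c ∧
          ∀ A ∈ (∅ : Finset (Finset ℕ)), t ≤ (T ∩ A).card} :=
        ⟨∅, Finset.empty_subset _, Finset.card_empty, fun A hA => absurd hA (by simp)⟩
      have := Nat.sInf_le h0
      rw [show sInf {c : ℕ | ∃ T : Finset ℕ, T ⊆ Finset.Icc 1 n ∧ T.card = c ∧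
          ∀ A ∈ (∅ : Finset (Finset ℕ)), t ≤ (T ∩ A).card} = tau n t ∅ from rfl, htG] at this
      omega
    · exact h
  -- no t-cover of G of size t
  have hNoT : ∀ X : Finset ℕ, X ⊆ Finset.Icc 1 n → X.card = t →
      ¬ (∀ A ∈ G, t ≤ (X ∩ A).card) := by
    intro X h1 h2 h3
    have hmem : t ∈ {c : ℕ | ∃ T : Finset ℕ, T ⊆ Finset.Icc 1 n ∧ T.card = c ∧
        ∀ A ∈ G, t ≤ (T ∩ A).card} := ⟨X, h1, h2, h3⟩
    have := Nat.sInf_le hmem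
    rw [show sInf {c : ℕ | ∃ T : Finset ℕ, T ⊆ Finset.Icc 1 n ∧ T.card = c ∧
        ∀ A ∈ G, t ≤ (T ∩ A).card} = tau n t G from rfl, htG] at this
    omega
  intro T hT T' hT'
  by_contra hcon
  push_neg at hcon
  simp only [covers, Finset.mem_filter, Finset.mem_powerset] at hT hT'
  obtain ⟨hTsub, hTcard, hTcov⟩ := hT
  obtain ⟨hT'sub, hT'card, hT'cov⟩ := hT'
  set S := T ∩ T' with hSdef
  -- decomposition of every member of G
  have hdec : ∀ B ∈ G, ∃ a b, a ∈ T ∧ a ∉ T' ∧ b ∈ T' ∧ b ∉ T ∧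
      B = insert a (insert b S) ∧ S.card + 1 = t := by
    intro B hB
    obtain ⟨hBsub, hBcard⟩ := hGmem B hB
    have h1 : t ≤ (T ∩ B).card := hTcov B hB
    have h2 : t ≤ (T' ∩ B).card := hT'cov B hB
    have hsubB : (T ∩ B) ∪ (T' ∩ B) ⊆ B :=
      Finset.union_subset (Finset.inter_subset_right) (Finset.inter_subset_right)
    have hUcard : ((T ∩ B) ∪ (T' ∩ B)).card ≤ t + 1 := by
      rw [← hBcard]; exact Finset.card_le_card hsubB
    have hIeq : (T ∩ B) ∩ (T' ∩ B) = S ∩ B := by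
      ext x
      simp only [Finset.mem_inter, hSdef]
      tauto
    have hIsub : (T ∩ B) ∩ (T' ∩ B) ⊆ S := by
      rw [hIeq]; exact Finset.inter_subset_left
    have hIcard : ((T ∩ B) ∩ (T' ∩ B)).card ≤ S.card := Finset.card_le_card hIsub
    have hsum : ((T ∩ B) ∪ (T' ∩ B)).card + ((T ∩ B) ∩ (T' ∩ B)).card
        = (T ∩ B).card + (T' ∩ B).card := Finset.card_union_add_card_inter _ _
    have hTBle : (T ∩ B).card ≤ t + 1 := by
      rw [← hTcard]; exact Finset.card_le_card Finset.inter_subset_left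
    have hT'Ble : (T' ∩ B).card ≤ t + 1 := by
      rw [← hT'card]; exact Finset.card_le_card Finset.inter_subset_left
    have hScard : S.card + 1 = t := by omega
    have hIS : (T ∩ B) ∩ (T' ∩ B) = S :=
      Finset.eq_of_subset_of_card_le hIsub (by omega)
    have hTB : (T ∩ B).card = t := by omega
    have hT'B : (T' ∩ B).card = t := by omega
    have hUB : (T ∩ B) ∪ (T' ∩ B) = B :=
      Finset.eq_of_subset_of_card_le hsubB (by omega)
    have hSsubTB : S ⊆ T ∩ B := hIS ▸ Finset.inter_subset_left
    have hSsubT'B : S ⊆ T' ∩ B := hIS ▸ Finset.inter_subset_right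
    have ha1 : ((T ∩ B) \ S).card = 1 := by
      rw [Finset.card_sdiff_of_subset hSsubTB]; omega
    have hb1 : ((T' ∩ B) \ S).card = 1 := by
      rw [Finset.card_sdiff_of_subset hSsubT'B]; omega
    obtain ⟨a, ha⟩ := Finset.card_eq_one.mp ha1
    obtain ⟨b, hb⟩ := Finset.card_eq_one.mp hb1
    have haTB : a ∈ (T ∩ B) \ S := ha ▸ Finset.mem_singleton_self a
    have hbT'B : b ∈ (T' ∩ B) \ S := hb ▸ Finset.mem_singleton_self b
    rw [Finset.mem_sdiff, Finset.mem_inter] at haTB hbT'B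
    have haT' : a ∉ T' := fun h => haTB.2 (Finset.mem_inter.mpr ⟨haTB.1.1, h⟩)
    have hbT : b ∉ T := fun h => hbT'B.2 (Finset.mem_inter.mpr ⟨h, hbT'B.1.1⟩)
    have hTBeq : T ∩ B = insert a S := by
      have := Finset.sdiff_union_of_subset hSsubTB
      rw [ha] at this
      rw [← this, ← Finset.insert_eq]
    have hT'Beq : T' ∩ B = insert b S := by
      have := Finset.sdiff_union_of_subset hSsubT'B
      rw [hb] at this
      rw [← this, ← Finset.insert_eq]
    refine ⟨a, b, haTB.1.1, haT', hbT'B.1.1, hbT, ?_, hScard⟩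
    rw [← hUB, hTBeq, hT'Beq]
    ext x
    simp only [Finset.mem_union, Finset.mem_insert]
    tauto
  -- key: two members must share an extra element
  have key : ∀ B₁ ∈ G, ∀ B₂ ∈ G, ∀ a₁ b₁ a₂ b₂,
      a₁ ∈ T → b₁ ∉ T → a₂ ∈ T → b₂ ∉ T →
      B₁ = insert a₁ (insert b₁ S) → B₂ = insert a₂ (insert b₂ S) →
      a₁ = a₂ ∨ b₁ = b₂ := by
    intro B₁ hB₁ B₂ hB₂ a₁ b₁ a₂ b₂ ha₁ hb₁ ha₂ hb₂ hE₁ hE₂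
    by_contra hne
    push_neg at hne
    have hint : t ≤ (B₁ ∩ B₂).card := hTf B₁ hB₁ B₂ hB₂
    have hsub : B₁ ∩ B₂ ⊆ S := by
      intro x hx
      rw [Finset.mem_inter, hE₁, hE₂] at hx
      simp only [Finset.mem_insert] at hx
      obtain ⟨h1, h2⟩ := hx
      rcases h1 with h1 | h1 | h1
      · rcases h2 with h2 | h2 | h2
        · exact absurd (h1.symm.trans h2) hne.1
        · exact absurd (show b₂ ∈ T from (h1.symm.trans h2) ▸ ha₁) hb₂
        · exact h1 ▸ h2
      · rcases h2 with h2 | h2 | h2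
        · exact absurd (show b₁ ∈ T from (h2.symm.trans h1) ▸ ha₂) hb₁
        · exact absurd (h1.symm.trans h2) hne.2
        · exact h1 ▸ h2
      · exact h1
    have hle : (B₁ ∩ B₂).card ≤ S.card := Finset.card_le_card hsub
    have : S.card + 1 = t := by
      obtain ⟨_, _, _, _, _, _, _, h⟩ := hdec B₁ hB₁
      exact h
    omega
  -- build a t-cover of size t
  obtain ⟨G₀, hG₀⟩ := hGne
  obtain ⟨a₀, b₀, ha₀T, ha₀T', hb₀T', hb₀T, hE₀, hScard⟩ := hdec G₀ hG₀
  have hSsubIcc : S ⊆ Finset.Icc 1 n := fun x hx => hTsub (Finset.inter_subset_left hx)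
  have hcommon : ∃ c, c ∈ Finset.Icc 1 n ∧ c ∉ S ∧ ∀ B ∈ G, c ∈ B := by
    by_cases hA : ∀ B ∈ G, a₀ ∈ B
    · exact ⟨a₀, hTsub ha₀T, fun h => ha₀T' (Finset.inter_subset_right h), hA⟩
    · push_neg at hA
      obtain ⟨B₁, hB₁, ha₀B₁⟩ := hA
      obtain ⟨a₁, b₁, ha₁T, ha₁T', hb₁T', hb₁T, hE₁, _⟩ := hdec B₁ hB₁
      have hne : a₀ ≠ a₁ := by
        intro h; apply ha₀B₁; rw [hE₁, h]; exact Finset.mem_insert_self _ _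
      have hb01 : b₀ = b₁ := by
        rcases key G₀ hG₀ B₁ hB₁ a₀ b₀ a₁ b₁ ha₀T hb₀T ha₁T hb₁T hE₀ hE₁ with h | h
        · exact absurd h hne
        · exact h
      refine ⟨b₀, hT'sub hb₀T', fun h => hb₀T (Finset.inter_subset_left h), ?_⟩
      intro B hB
      obtain ⟨a, b, haT, haT', hbT', hbT, hE, _⟩ := hdec B hB
      rcases key B hB G₀ hG₀ a b a₀ b₀ haT hbT ha₀T hb₀T hE hE₀ with h0 | h0
      · rcases key B hB B₁ hB₁ a b a₁ b₁ haT hbT ha₁T hb₁T hE hE₁ with h1 | h1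
        · exact absurd (h0 ▸ h1) hne
        · rw [hE]; simp [h1, hb01]
      · rw [hE]; simp [h0]
  obtain ⟨c, hcIcc, hcS, hcB⟩ := hcommon
  apply hNoT (insert c S)
  · exact Finset.insert_subset hcIcc hSsubIcc
  · rw [Finset.card_insert_of_notMem hcS]; omega
  · intro B hB
    have hXB : insert c S ⊆ B := by
      obtain ⟨a, b, _, _, _, _, hE, _⟩ := hdec B hB
      refine Finset.insert_subset (hcB B hB) ?_
      rw [hE]
      exact fun x hx => Finset.mem_insert_of_mem (Finset.mem_insert_of_mem hx)
    rw [Finset.inter_eq_left.mpr hXB, Finset.card_insert_of_notMem hcS]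
    omega
end

section
/- Under the standing setup, |F| ≤ g(|T_g|, k, ℓ, t) and |G| ≤ g(|T_f|, ℓ, k, t), where g(m,x,y,t) = m·C(n−t−1, x−t−1) + y(t+1)(y−t+1)·C(n−t−2, x−t−2). -/
lemma mem_ksubsets {S A : Finset ℕ} {k : ℕ} : A ∈ ksubsets S k ↔ A ⊆ S ∧ A.card = k := by
  simp [ksubsets, Finset.mem_filter, Finset.mem_powerset]

/-- Counting sets in `ksubsets I k` containing a fixed set `Q`. -/
lemma count_contains (I : Finset ℕ) (k : ℕ) (Q : Finset ℕ) (hQI : Q ⊆ I) :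
    ((ksubsets I k).filter (fun A => Q ⊆ A)).card ≤ (I.card - Q.card).choose (k - Q.card) := by
  have hsub : (ksubsets I k).filter (fun A => Q ⊆ A) ⊆
      ((I \ Q).powersetCard (k - Q.card)).image (fun R => Q ∪ R) := by
    intro A hA
    rw [Finset.mem_filter] at hA
    obtain ⟨hAk, hQA⟩ := hA
    rw [mem_ksubsets] at hAk
    refine Finset.mem_image.mpr ⟨A \ Q, ?_, Finset.union_sdiff_of_subset hQA⟩
    rw [Finset.mem_powersetCard]
    exact ⟨Finset.sdiff_subset_sdiff hAk.1 Finset.Subset.rfl,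
      by rw [Finset.card_sdiff_of_subset hQA, hAk.2]⟩
  calc ((ksubsets I k).filter (fun A => Q ⊆ A)).card
      ≤ (((I \ Q).powersetCard (k - Q.card)).image (fun R => Q ∪ R)).card :=
        Finset.card_le_card hsub
    _ ≤ ((I \ Q).powersetCard (k - Q.card)).card := Finset.card_image_le
    _ = (I \ Q).card.choose (k - Q.card) := Finset.card_powersetCard _ _
    _ = (I.card - Q.card).choose (k - Q.card) := by rw [Finset.card_sdiff_of_subset hQI]

noncomputable def pickW (t : ℕ) (G : Finset (Finset ℕ)) (D : Finset ℕ) : Finset ℕ :=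
  if h : ∃ B ∈ G, (D ∩ B).card < t then h.choose else ∅

lemma pickW_spec {t : ℕ} {G : Finset (Finset ℕ)} {D : Finset ℕ}
    (h : ∃ B ∈ G, (D ∩ B).card < t) :
    pickW t G D ∈ G ∧ (D ∩ pickW t G D).card < t := by
  rw [pickW, dif_pos h]
  exact ⟨h.choose_spec.1, h.choose_spec.2⟩

lemma pickW_mem_or {t : ℕ} {G : Finset (Finset ℕ)} {D : Finset ℕ} :
    pickW t G D ∈ G ∨ pickW t G D = ∅ := by
  rw [pickW]
  split
  · next h => exact Or.inl h.choose_spec.1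
  · exact Or.inr rfl

noncomputable def poolF (t : ℕ) (G : Finset (Finset ℕ)) (S : Finset ℕ) : Finset (Finset ℕ) :=
  if (S ∩ pickW t G S).card + 1 = t
  then ((pickW t G S) \ S).image (fun z => insert z S)
  else (((pickW t G S) \ S).powersetCard 2).image (fun P => S ∪ P)

lemma card_Iv1 (n : ℕ) : (Iv 1 n).card = n := by
  rw [Iv, Nat.card_Icc]; omega

/-- The key per-(x,y) bound: sets of `F` forced to contain a seed from `poolF`. -/
lemma poolF_bound (n k l t : ℕ) (G : Finset (Finset ℕ)) (hG : G ⊆ ksubsets (Iv 1 n) l)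
    (hl : t + 1 ≤ l) (hkn : k ≤ n)
    (hn3 : l * l * (k - t - 2) + (t + 2) ≤ n)
    (S : Finset ℕ) (hSI : S ⊆ Finset.Icc 1 n) (hScard : S.card = t + 1) :
    ((poolF t G S).biUnion (fun Q => (ksubsets (Iv 1 n) k).filter (fun A => Q ⊆ A))).card
      ≤ (l - t + 1) * (if t + 2 ≤ k then Nat.choose (n - (t+2)) (k - (t+2)) else 0) := by
  have hB2 : (pickW t G S).card ≤ l ∧ pickW t G S ⊆ Finset.Icc 1 n := by
    rcases pickW_mem_or (t := t) (G := G) (D := S) with h | h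
    · obtain ⟨h1, h2⟩ := mem_ksubsets.mp (hG h)
      exact ⟨le_of_eq h2, h1⟩
    · rw [h]; simp
  rw [poolF]
  by_cases hcase : (S ∩ pickW t G S).card + 1 = t
  · rw [if_pos hcase]
    have hpc : (((pickW t G S) \ S).image (fun z => insert z S)).card ≤ l - t + 1 := by
      refine le_trans Finset.card_image_le ?_
      have e1 : ((pickW t G S) \ S).card + ((pickW t G S) ∩ S).card = (pickW t G S).card :=
        Finset.card_sdiff_add_card_inter _ _
      have e2 : (pickW t G S) ∩ S = S ∩ (pickW t G S) := Finset.inter_comm _ _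
      have e3 : ((pickW t G S) ∩ S).card = (S ∩ pickW t G S).card := by rw [e2]
      omega
    by_cases hk2 : t + 2 ≤ k
    · rw [if_pos hk2]
      refine le_trans Finset.card_biUnion_le ?_
      refine le_trans (Finset.sum_le_card_nsmul _ _ ((n - (t+2)).choose (k - (t+2))) ?_) ?_
      · intro Q hQ
        obtain ⟨z, hz, rfl⟩ := Finset.mem_image.mp hQ
        rw [Finset.mem_sdiff] at hz
        have hQI : insert z S ⊆ Iv 1 n := by
          rw [Iv]; exact Finset.insert_subset (hB2.2 hz.1) hSI
        have hQc : (insert z S).card = t + 2 := by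
          rw [Finset.card_insert_of_notMem hz.2, hScard]
        calc ((ksubsets (Iv 1 n) k).filter (fun A => insert z S ⊆ A)).card
            ≤ ((Iv 1 n).card - (insert z S).card).choose (k - (insert z S).card) :=
              count_contains _ _ _ hQI
          _ = (n - (t+2)).choose (k - (t+2)) := by rw [card_Iv1, hQc]
      · rw [smul_eq_mul]
        exact Nat.mul_le_mul_right _ hpc
    · rw [if_neg hk2]
      rw [Nat.mul_zero]
      refine le_trans Finset.card_biUnion_le (le_of_eq (Finset.sum_eq_zero ?_))
      intro Q hQ
      obtain ⟨z, hz, rfl⟩ := Finset.mem_image.mp hQ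
      rw [Finset.mem_sdiff] at hz
      rw [Finset.card_eq_zero, Finset.filter_eq_empty_iff]
      intro A hA hQA
      obtain ⟨_, hAk⟩ := mem_ksubsets.mp hA
      have := Finset.card_le_card hQA
      rw [Finset.card_insert_of_notMem hz.2, hScard, hAk] at this
      omega
  · rw [if_neg hcase]
    have hpc : ((((pickW t G S) \ S).powersetCard 2).image (fun P => S ∪ P)).card
        ≤ l.choose 2 := by
      refine le_trans Finset.card_image_le ?_
      rw [Finset.card_powersetCard]
      exact Nat.choose_le_choose 2 (le_trans (Finset.card_le_card (Finset.sdiff_subset)) hB2.1)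
    by_cases hk3 : t + 3 ≤ k
    · have hk2 : t + 2 ≤ k := by omega
      rw [if_pos hk2]
      refine le_trans Finset.card_biUnion_le ?_
      refine le_trans (Finset.sum_le_card_nsmul _ _ ((n - (t+3)).choose (k - (t+3))) ?_) ?_
      · intro Q hQ
        obtain ⟨P, hP, rfl⟩ := Finset.mem_image.mp hQ
        rw [Finset.mem_powersetCard] at hP
        have hdisj : Disjoint S P := by
          rw [Finset.disjoint_right]
          intro a ha
          exact (Finset.mem_sdiff.mp (hP.1 ha)).2
        have hQc : (S ∪ P).card = t + 3 := by
          rw [Finset.card_union_of_disjoint hdisj, hScard, hP.2]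
        have hQI : S ∪ P ⊆ Iv 1 n := by
          rw [Iv]
          exact Finset.union_subset hSI ((hP.1.trans Finset.sdiff_subset).trans hB2.2)
        calc ((ksubsets (Iv 1 n) k).filter (fun A => S ∪ P ⊆ A)).card
            ≤ ((Iv 1 n).card - (S ∪ P).card).choose (k - (S ∪ P).card) :=
              count_contains _ _ _ hQI
          _ = (n - (t+3)).choose (k - (t+3)) := by rw [card_Iv1, hQc]
      · rw [smul_eq_mul]
        -- arithmetic: choose l 2 * C(n-t-3, k-t-3) ≤ (l-t+1) * C(n-t-2, k-t-2)
        have hnt3 : t + 3 ≤ n := le_trans hk3 hkn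
        have hkey : (n - (t+2)) * ((n - (t+3)).choose (k - (t+3)))
            = ((n - (t+2)).choose (k - (t+2))) * (k - (t+2)) := by
          have e1 : n - (t+2) = (n - (t+3)) + 1 := by omega
          have e2 : k - (t+2) = (k - (t+3)) + 1 := by omega
          rw [e1, e2]
          exact Nat.add_one_mul_choose_eq _ _
        have hc2 : l.choose 2 ≤ l * l := by
          rw [Nat.choose_two_right]
          exact le_trans (Nat.div_le_self _ _) (Nat.mul_le_mul_left l (Nat.sub_le _ _))
        have hmain : l.choose 2 * (k - (t+2)) ≤ (l - t + 1) * (n - (t+2)) := by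
          have h1 : l.choose 2 * (k - (t+2)) ≤ l * l * (k - t - 2) := by
            have : k - (t+2) = k - t - 2 := by omega
            rw [this]
            exact Nat.mul_le_mul_right _ hc2
          have h2 : l * l * (k - t - 2) ≤ n - (t+2) := by omega
          have h3 : n - (t+2) ≤ (l - t + 1) * (n - (t+2)) :=
            Nat.le_mul_of_pos_left _ (by omega)
          omega
        have hpos : 0 < n - (t+2) := by omega
        refine Nat.le_of_mul_le_mul_right ?_ hpos
        calc ((((pickW t G S) \ S).powersetCard 2).image (fun P => S ∪ P)).card
              * ((n - (t+3)).choose (k - (t+3))) * (n - (t+2))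
            = ((((pickW t G S) \ S).powersetCard 2).image (fun P => S ∪ P)).card
              * ((n - (t+2)) * ((n - (t+3)).choose (k - (t+3)))) := by ring
          _ = ((((pickW t G S) \ S).powersetCard 2).image (fun P => S ∪ P)).card
              * (((n - (t+2)).choose (k - (t+2))) * (k - (t+2))) := by rw [hkey]
          _ ≤ (l.choose 2) * (((n - (t+2)).choose (k - (t+2))) * (k - (t+2))) :=
              Nat.mul_le_mul_right _ hpc
          _ = (l.choose 2 * (k - (t+2))) * ((n - (t+2)).choose (k - (t+2))) := by ring
          _ ≤ ((l - t + 1) * (n - (t+2))) * ((n - (t+2)).choose (k - (t+2))) :=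
              Nat.mul_le_mul_right _ hmain
          _ = (l - t + 1) * ((n - (t+2)).choose (k - (t+2))) * (n - (t+2)) := by ring
    · refine le_trans Finset.card_biUnion_le
        (le_trans (le_of_eq (Finset.sum_eq_zero ?_)) (Nat.zero_le _))
      intro Q hQ
      obtain ⟨P, hP, rfl⟩ := Finset.mem_image.mp hQ
      rw [Finset.mem_powersetCard] at hP
      have hdisj : Disjoint S P := by
        rw [Finset.disjoint_right]
        intro a ha
        exact (Finset.mem_sdiff.mp (hP.1 ha)).2
      rw [Finset.card_eq_zero, Finset.filter_eq_empty_iff]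
      intro A hA hQA
      obtain ⟨_, hAk⟩ := mem_ksubsets.mp hA
      have := Finset.card_le_card hQA
      rw [Finset.card_union_of_disjoint hdisj, hScard, hP.2, hAk] at this
      omega

lemma main_bound (n k l t : ℕ) (hk : t + 1 ≤ k) (hl : t + 1 ≤ l)
    (hn : (t+1)^2 * (k+l)^2 * (k - t + 1) * (l - t + 1) + k + l - t ≤ n)
    (F G : Finset (Finset ℕ))
    (hF : F ⊆ ksubsets (Iv 1 n) k) (hG : G ⊆ ksubsets (Iv 1 n) l)
    (hcross : crossInt t F G)
    (htF : tau n t F = t + 1) (htG : tau n t G = t + 1) :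
    (F.card : ℤ) ≤ gfun n ((covers n t G).card) k l t := by
  classical
  -- basic numeric facts
  have hkn : k ≤ n := by omega
  have hln : l ≤ n := by omega
  have hXl : l * l * (k - t - 2) ≤ (t+1)^2 * (k+l)^2 * (k - t + 1) * (l - t + 1) := by
    have h1 : l * l ≤ (k+l)^2 := by nlinarith
    have h2 : k - t - 2 ≤ k - t + 1 := by omega
    have h3 : l * l * (k - t - 2) ≤ (k+l)^2 * (k - t + 1) := Nat.mul_le_mul h1 h2
    have h4 : (k+l)^2 * (k - t + 1) ≤ (t+1)^2 * (k+l)^2 * (k - t + 1) * (l - t + 1) := by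
      have h5 : 1 * ((k+l)^2 * (k - t + 1)) * 1 ≤ (t+1)^2 * ((k+l)^2 * (k - t + 1)) * (l - t + 1) := by
        refine Nat.mul_le_mul (Nat.mul_le_mul ?_ le_rfl) ?_
        · exact Nat.one_le_iff_ne_zero.mpr (by positivity)
        · omega
      calc (k+l)^2 * (k - t + 1) = 1 * ((k+l)^2 * (k - t + 1)) * 1 := by ring
        _ ≤ (t+1)^2 * ((k+l)^2 * (k - t + 1)) * (l - t + 1) := h5
        _ = (t+1)^2 * (k+l)^2 * (k - t + 1) * (l - t + 1) := by ring
    omega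
  have hn3 : l * l * (k - t - 2) + (t + 2) ≤ n := by omega
  -- existence of a (t+1)-cover of F
  have hSf_ne : n ∈ {c : ℕ | ∃ T : Finset ℕ, T ⊆ Finset.Icc 1 n ∧ T.card = c ∧
      ∀ A ∈ F, t ≤ (T ∩ A).card} := by
    refine ⟨Finset.Icc 1 n, Finset.Subset.rfl, by rw [Nat.card_Icc]; omega, ?_⟩
    intro A hA
    obtain ⟨hAI, hAk⟩ := mem_ksubsets.mp (hF hA)
    have hint : Finset.Icc 1 n ∩ A = A := Finset.inter_eq_right.mpr hAI
    rw [hint, hAk]; omega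
  have hTf : ∃ T : Finset ℕ, T ⊆ Finset.Icc 1 n ∧ T.card = t + 1 ∧
      ∀ A ∈ F, t ≤ (T ∩ A).card := by
    have hmem : tau n t F ∈ {c : ℕ | ∃ T : Finset ℕ, T ⊆ Finset.Icc 1 n ∧ T.card = c ∧
        ∀ A ∈ F, t ≤ (T ∩ A).card} := Nat.sInf_mem ⟨n, hSf_ne⟩
    rw [htF] at hmem
    exact hmem
  obtain ⟨T', hT'I, hT'card, hT'cov⟩ := hTf
  -- no t-cover of G of size ≤ t
  have hnoG : ∀ D : Finset ℕ, D ⊆ Finset.Icc 1 n → D.card ≤ t →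
      ∃ B ∈ G, (D ∩ B).card < t := by
    intro D hDI hDc
    by_contra hcon
    push_neg at hcon
    have hmem : D.card ∈ {c : ℕ | ∃ T : Finset ℕ, T ⊆ Finset.Icc 1 n ∧ T.card = c ∧
        ∀ A ∈ G, t ≤ (T ∩ A).card} := ⟨D, hDI, rfl, hcon⟩
    have hle : tau n t G ≤ D.card := Nat.sInf_le hmem
    rw [htG] at hle; omega
  have hcovG : ∀ S : Finset ℕ, S ⊆ Finset.Icc 1 n → S.card = t + 1 → S ∉ covers n t G →
      ∃ B ∈ G, (S ∩ B).card < t := by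
    intro S hS1 hS2 hS3
    by_contra hcon
    push_neg at hcon
    refine hS3 ?_
    rw [covers, Finset.mem_filter, Finset.mem_powerset]
    exact ⟨hS1, hS2, hcon⟩
  -- the two covering families
  set X₂ : ℕ := if t + 2 ≤ k then Nat.choose (n - (t+2)) (k - (t+2)) else 0 with hX₂def
  set U₁ : Finset (Finset ℕ) :=
    (covers n t G).biUnion (fun T => (ksubsets (Iv 1 n) k).filter (fun A => T ⊆ A)) with hU₁def
  set U₂ : Finset (Finset ℕ) :=
    T'.biUnion (fun x =>
      ((pickW t G (T'.erase x)) \ (T'.erase x)).biUnion (fun y =>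
        (poolF t G (insert y (T'.erase x))).biUnion
          (fun Q => (ksubsets (Iv 1 n) k).filter (fun A => Q ⊆ A)))) with hU₂def
  -- covering claim
  have hcover : F ⊆ U₁ ∪ U₂ := by
    intro A hA
    have hAks : A ∈ ksubsets (Iv 1 n) k := hF hA
    obtain ⟨hAI, hAk⟩ := mem_ksubsets.mp hAks
    by_cases hc1 : ∃ T ∈ covers n t G, T ⊆ A
    · obtain ⟨T, hT, hTA⟩ := hc1
      exact Finset.mem_union_left _ (Finset.mem_biUnion.mpr
        ⟨T, hT, Finset.mem_filter.mpr ⟨hAks, hTA⟩⟩)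
    · push_neg at hc1
      refine Finset.mem_union_right _ ?_
      have hTA : t ≤ (T' ∩ A).card := hT'cov A hA
      obtain ⟨E₀, hE₀sub, hE₀card⟩ := Finset.exists_subset_card_eq hTA
      have hE₀T' : E₀ ⊆ T' := hE₀sub.trans Finset.inter_subset_left
      have hE₀A : E₀ ⊆ A := hE₀sub.trans Finset.inter_subset_right
      have hx1 : (T' \ E₀).card = 1 := by
        rw [Finset.card_sdiff_of_subset hE₀T', hT'card, hE₀card]; omega
      obtain ⟨x, hxeq⟩ := Finset.card_eq_one.mp hx1
      have hxmem : x ∈ T' \ E₀ := by rw [hxeq]; exact Finset.mem_singleton_self x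
      have hxT' : x ∈ T' := (Finset.mem_sdiff.mp hxmem).1
      have hxE₀ : x ∉ E₀ := (Finset.mem_sdiff.mp hxmem).2
      have hE₀eq : E₀ = T'.erase x := by
        refine Finset.eq_of_subset_of_card_le ?_ ?_
        · intro a ha
          refine Finset.mem_erase.mpr ⟨?_, hE₀T' ha⟩
          intro hax; exact hxE₀ (hax ▸ ha)
        · rw [Finset.card_erase_of_mem hxT', hT'card, hE₀card]; omega
      have hEI : T'.erase x ⊆ Finset.Icc 1 n := (Finset.erase_subset _ _).trans hT'I
      have hEc : (T'.erase x).card ≤ t := by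
        rw [Finset.card_erase_of_mem hxT', hT'card]; omega
      have hw := pickW_spec (hnoG _ hEI hEc)
      have hAB1 : t ≤ (A ∩ pickW t G (T'.erase x)).card := hcross A hA _ hw.1
      have hy : ∃ y ∈ A ∩ pickW t G (T'.erase x), y ∉ T'.erase x := by
        by_contra hcon
        push_neg at hcon
        have hsub2 : A ∩ pickW t G (T'.erase x) ⊆ (T'.erase x) ∩ pickW t G (T'.erase x) :=
          fun a ha => Finset.mem_inter.mpr ⟨hcon a ha, (Finset.mem_inter.mp ha).2⟩
        have := Finset.card_le_card hsub2
        omega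
      obtain ⟨y, hyAB, hyE⟩ := hy
      have hyA : y ∈ A := (Finset.mem_inter.mp hyAB).1
      have hyB1 : y ∈ pickW t G (T'.erase x) := (Finset.mem_inter.mp hyAB).2
      have hSA : insert y (T'.erase x) ⊆ A := by
        refine Finset.insert_subset hyA ?_
        rw [← hE₀eq]; exact hE₀A
      have hSI : insert y (T'.erase x) ⊆ Finset.Icc 1 n := by
        refine Finset.insert_subset ?_ hEI
        exact (mem_ksubsets.mp (hG hw.1)).1 hyB1
      have hScard : (insert y (T'.erase x)).card = t + 1 := by
        rw [Finset.card_insert_of_notMem hyE, Finset.card_erase_of_mem hxT', hT'card]; omega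
      have hSnc : insert y (T'.erase x) ∉ covers n t G := fun hc => hc1 _ hc hSA
      have hw2 := pickW_spec (hcovG _ hSI hScard hSnc)
      have hAB2 : t ≤ (A ∩ pickW t G (insert y (T'.erase x))).card := hcross A hA _ hw2.1
      refine Finset.mem_biUnion.mpr ⟨x, hxT', Finset.mem_biUnion.mpr
        ⟨y, Finset.mem_sdiff.mpr ⟨hyB1, hyE⟩, ?_⟩⟩
      rw [poolF]
      by_cases hcase : (insert y (T'.erase x) ∩ pickW t G (insert y (T'.erase x))).card + 1 = t
      · rw [if_pos hcase]
        have hz : ∃ z ∈ A ∩ pickW t G (insert y (T'.erase x)), z ∉ insert y (T'.erase x) := by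
          by_contra hcon
          push_neg at hcon
          have hsub2 : A ∩ pickW t G (insert y (T'.erase x)) ⊆
              insert y (T'.erase x) ∩ pickW t G (insert y (T'.erase x)) :=
            fun a ha => Finset.mem_inter.mpr ⟨hcon a ha, (Finset.mem_inter.mp ha).2⟩
          have := Finset.card_le_card hsub2
          omega
        obtain ⟨z, hzAB, hzS⟩ := hz
        refine Finset.mem_biUnion.mpr ⟨insert z (insert y (T'.erase x)), ?_, ?_⟩
        · exact Finset.mem_image.mpr ⟨z, Finset.mem_sdiff.mpr
            ⟨(Finset.mem_inter.mp hzAB).2, hzS⟩, rfl⟩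
        · exact Finset.mem_filter.mpr ⟨hAks,
            Finset.insert_subset (Finset.mem_inter.mp hzAB).1 hSA⟩
      · rw [if_neg hcase]
        have h2 : 2 ≤ ((A ∩ pickW t G (insert y (T'.erase x))) \ insert y (T'.erase x)).card := by
          have e := Finset.card_sdiff_add_card_inter
            (A ∩ pickW t G (insert y (T'.erase x))) (insert y (T'.erase x))
          have hsub2 : (A ∩ pickW t G (insert y (T'.erase x))) ∩ insert y (T'.erase x) ⊆
              insert y (T'.erase x) ∩ pickW t G (insert y (T'.erase x)) := by
            intro a ha
            rw [Finset.mem_inter] at ha ⊢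
            rw [Finset.mem_inter] at ha
            exact ⟨ha.2, ha.1.2⟩
          have := Finset.card_le_card hsub2
          omega
        obtain ⟨P, hPsub, hPcard⟩ := Finset.exists_subset_card_eq h2
        refine Finset.mem_biUnion.mpr ⟨insert y (T'.erase x) ∪ P, ?_, ?_⟩
        · refine Finset.mem_image.mpr ⟨P, ?_, rfl⟩
          rw [Finset.mem_powersetCard]
          refine ⟨?_, hPcard⟩
          intro a ha
          have := hPsub ha
          rw [Finset.mem_sdiff, Finset.mem_inter] at this
          exact Finset.mem_sdiff.mpr ⟨this.1.2, this.2⟩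
        · refine Finset.mem_filter.mpr ⟨hAks, Finset.union_subset hSA ?_⟩
          intro a ha
          have := hPsub ha
          rw [Finset.mem_sdiff, Finset.mem_inter] at this
          exact this.1.1
  -- counting U₁
  have hU1 : U₁.card ≤ (covers n t G).card * ((n - (t+1)).choose (k - (t+1))) := by
    refine le_trans Finset.card_biUnion_le ?_
    refine le_trans (Finset.sum_le_card_nsmul _ _ ((n - (t+1)).choose (k - (t+1))) ?_)
      (by rw [smul_eq_mul])
    intro T hT
    rw [covers, Finset.mem_filter, Finset.mem_powerset] at hT
    calc ((ksubsets (Iv 1 n) k).filter (fun A => T ⊆ A)).card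
        ≤ ((Iv 1 n).card - T.card).choose (k - T.card) := count_contains _ _ _ hT.1
      _ = (n - (t+1)).choose (k - (t+1)) := by rw [card_Iv1, hT.2.1]
  -- counting U₂
  have hU2 : U₂.card ≤ (t+1) * (l * ((l - t + 1) * X₂)) := by
    refine le_trans Finset.card_biUnion_le ?_
    refine le_trans (Finset.sum_le_card_nsmul _ _ (l * ((l - t + 1) * X₂)) ?_) ?_
    · intro x hx
      refine le_trans Finset.card_biUnion_le ?_
      refine le_trans (Finset.sum_le_card_nsmul _ _ ((l - t + 1) * X₂) ?_) ?_
      · intro y hy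
        rw [Finset.mem_sdiff] at hy
        have hB1G : pickW t G (T'.erase x) ∈ G := by
          rcases pickW_mem_or (t := t) (G := G) (D := T'.erase x) with h | h
          · exact h
          · rw [h] at hy; exact absurd hy.1 (Finset.notMem_empty y)
        have hSI : insert y (T'.erase x) ⊆ Finset.Icc 1 n := by
          refine Finset.insert_subset ?_ (((Finset.erase_subset _ _)).trans hT'I)
          exact (mem_ksubsets.mp (hG hB1G)).1 hy.1
        have hScard : (insert y (T'.erase x)).card = t + 1 := by
          rw [Finset.card_insert_of_notMem hy.2, Finset.card_erase_of_mem hx, hT'card]; omega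
        exact poolF_bound n k l t G hG hl hkn hn3 _ hSI hScard
      · rw [smul_eq_mul]
        refine Nat.mul_le_mul_right _ ?_
        refine le_trans (Finset.card_le_card Finset.sdiff_subset) ?_
        rcases pickW_mem_or (t := t) (G := G) (D := T'.erase x) with h | h
        · exact le_of_eq (mem_ksubsets.mp (hG h)).2
        · rw [h]; simp
    · rw [smul_eq_mul, hT'card]
  -- assemble ℕ bound
  have hFcard : F.card ≤ (covers n t G).card * ((n - (t+1)).choose (k - (t+1)))
      + (t+1) * (l * ((l - t + 1) * X₂)) := by
    calc F.card ≤ (U₁ ∪ U₂).card := Finset.card_le_card hcover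
      _ ≤ U₁.card + U₂.card := Finset.card_union_le _ _
      _ ≤ _ := Nat.add_le_add hU1 hU2
  -- ℤ conversion
  have hch1 : ch ((n:ℤ) - t - 1) ((k:ℤ) - t - 1) = ((n - (t+1)).choose (k - (t+1)) : ℤ) := by
    rw [ch, if_pos]
    · have e1 : ((n:ℤ) - t - 1).toNat = n - (t+1) := by omega
      have e2 : ((k:ℤ) - t - 1).toNat = k - (t+1) := by omega
      rw [e1, e2]
    · exact ⟨by omega, by omega⟩
  have hch2 : ch ((n:ℤ) - t - 2) ((k:ℤ) - t - 2) = (X₂ : ℤ) := by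
    rw [hX₂def]
    by_cases hk2 : t + 2 ≤ k
    · rw [if_pos hk2, ch, if_pos]
      · have e1 : ((n:ℤ) - t - 2).toNat = n - (t+2) := by omega
        have e2 : ((k:ℤ) - t - 2).toNat = k - (t+2) := by omega
        rw [e1, e2]
      · exact ⟨by omega, by omega⟩
    · rw [if_neg hk2, ch, if_neg]
      · simp
      · intro hcon
        have := hcon.1
        omega
  have hcast : ((l - t + 1 : ℕ) : ℤ) = (l:ℤ) - t + 1 := by omega
  calc (F.card : ℤ)
      ≤ (((covers n t G).card * ((n - (t+1)).choose (k - (t+1)))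
          + (t+1) * (l * ((l - t + 1) * X₂)) : ℕ) : ℤ) := by exact_mod_cast hFcard
    _ = ((covers n t G).card : ℤ) * ch ((n:ℤ) - t - 1) ((k:ℤ) - t - 1)
        + (l:ℤ) * ((t:ℤ)+1) * ((l:ℤ) - t + 1) * ch ((n:ℤ) - t - 2) ((k:ℤ) - t - 2) := by
        rw [hch1, hch2]
        push_cast [hcast]
        ring
    _ = gfun n ((covers n t G).card) k l t := by
        rw [gfun]


/-- Lemma 2.2: |F| ≤ g(|T_g|,k,ℓ,t) and |G| ≤ g(|T_f|,ℓ,k,t). -/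
theorem size_bound_via_covers
    (n k l t : ℕ) (hn0 : 0 < n) (ht0 : 0 < t) (hk : t + 1 ≤ k) (hl : t + 1 ≤ l)
    (hn : (t+1)^2 * (k+l)^2 * (k - t + 1) * (l - t + 1) + k + l - t ≤ n)
    (F G : Finset (Finset ℕ))
    (hmax : maximalCrossIn (Iv 1 n) k l t F G)
    (htF : tau n t F = t + 1) (htG : tau n t G = t + 1) :
    (F.card : ℤ) ≤ gfun n ((covers n t G).card) k l t ∧
    (G.card : ℤ) ≤ gfun n ((covers n t F).card) l k t := by
  obtain ⟨hFs, hGs, hcross, -⟩ := hmax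
  have hcross' : crossInt t G F := fun B hB A hA => by
    rw [Finset.inter_comm]; exact hcross A hA B hB
  have e : (t+1)^2 * (l+k)^2 * (l - t + 1) * (k - t + 1) + l + k
      = (t+1)^2 * (k+l)^2 * (k - t + 1) * (l - t + 1) + k + l := by ring
  have hn' : (t+1)^2 * (l+k)^2 * (l - t + 1) * (k - t + 1) + l + k - t ≤ n := by
    rw [e]; exact hn
  exact ⟨main_bound n k l t hk hl hn F G hFs hGs hcross htF htG,
    main_bound n l k t hl hk hn' G F hGs hFs hcross' htG htF⟩
end

section
/- Under the standing setup, suppose T_f ∪ T_g is a t-intersecting family with τ_t(T_f ∪ T_g) = t. Then min{k,ℓ} ≥ t+2, |T_f| ≤ k−t+1, and |T_g| ≤ ℓ−t+1. -/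
lemma covers_mem_iff (n t : ℕ) (F : Finset (Finset ℕ)) (C : Finset ℕ) :
    C ∈ covers n t F ↔
      C ⊆ Finset.Icc 1 n ∧ C.card = t + 1 ∧ ∀ A ∈ F, t ≤ (C ∩ A).card := by
  simp [covers, Finset.mem_filter, Finset.mem_powerset, and_assoc]

lemma aux_card_bound (k t : ℕ) (T A : Finset ℕ) (hTcard : T.card = t)
    (hAk : A.card = k) (hAsmall : (T ∩ A).card < t)
    (CF : Finset (Finset ℕ))
    (hkey : ∀ C ∈ CF, T ⊆ C)
    (hcard : ∀ C ∈ CF, C.card = t + 1)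
    (hcov : ∀ C ∈ CF, t ≤ (C ∩ A).card) :
    CF.card ≤ k - t + 1 := by
  rcases Finset.eq_empty_or_nonempty CF with he | ⟨C0, hC0⟩
  · simp [he]
  have hsub : CF ⊆ (A \ T).image (fun x => insert x T) := by
    intro C hC
    have hTC := hkey C hC
    have hcd : (C \ T).card = 1 := by
      rw [Finset.card_sdiff_of_subset hTC, hcard C hC, hTcard]; omega
    obtain ⟨x, hx⟩ := Finset.card_eq_one.1 hcd
    have hxCT : x ∈ C \ T := hx ▸ Finset.mem_singleton_self x
    have hxC : x ∈ C := (Finset.mem_sdiff.1 hxCT).1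
    have hxT : x ∉ T := (Finset.mem_sdiff.1 hxCT).2
    have hCeq : C = insert x T := by
      apply Finset.Subset.antisymm
      · intro y hy
        by_cases hyT : y ∈ T
        · exact Finset.mem_insert_of_mem hyT
        · have : y ∈ C \ T := Finset.mem_sdiff.2 ⟨hy, hyT⟩
          rw [hx, Finset.mem_singleton] at this
          exact this ▸ Finset.mem_insert_self x T
      · exact Finset.insert_subset hxC hTC
    have hxA : x ∈ A := by
      by_contra hxA
      have hss : C ∩ A ⊆ T ∩ A := by
        intro y hy
        rw [Finset.mem_inter] at hy ⊢
        rcases hy with ⟨hyC, hyA⟩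
        rw [hCeq, Finset.mem_insert] at hyC
        rcases hyC with rfl | hyT
        · exact absurd hyA hxA
        · exact ⟨hyT, hyA⟩
      have h1 := Finset.card_le_card hss
      have h2 := hcov C hC
      omega
    exact Finset.mem_image.2 ⟨x, Finset.mem_sdiff.2 ⟨hxA, hxT⟩, hCeq.symm⟩
  have h1 : CF.card ≤ (A \ T).card :=
    le_trans (Finset.card_le_card hsub) Finset.card_image_le
  -- lower bound on |T ∩ A| from C0
  have hTC0 := hkey C0 hC0
  have hss : C0 ∩ A ⊆ insert (A.card) (T ∩ A) ∨ True := Or.inr trivial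
  have hcd0 : (C0 \ T).card = 1 := by
    rw [Finset.card_sdiff_of_subset hTC0, hcard C0 hC0, hTcard]; omega
  obtain ⟨x0, hx0⟩ := Finset.card_eq_one.1 hcd0
  have hss0 : C0 ∩ A ⊆ insert x0 (T ∩ A) := by
    intro y hy
    rw [Finset.mem_inter] at hy
    rcases hy with ⟨hyC, hyA⟩
    by_cases hyT : y ∈ T
    · exact Finset.mem_insert_of_mem (Finset.mem_inter.2 ⟨hyT, hyA⟩)
    · have : y ∈ C0 \ T := Finset.mem_sdiff.2 ⟨hyC, hyT⟩
      rw [hx0, Finset.mem_singleton] at this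
      rw [this]
      exact Finset.mem_insert_self x0 _
  have h2 : (C0 ∩ A).card ≤ (T ∩ A).card + 1 :=
    le_trans (Finset.card_le_card hss0) (Finset.card_insert_le _ _)
  have h3 := hcov C0 hC0
  have h4 := Finset.card_inter_add_card_sdiff A T
  have h5 : (T ∩ A).card = (A ∩ T).card := by rw [Finset.inter_comm]
  omega

/-- Lemma 2.4(i): if T_f ∪ T_g is t-intersecting with τ_t(T_f ∪ T_g) = t, then
min{k,ℓ} ≥ t+2, |T_f| ≤ k−t+1 and |T_g| ≤ ℓ−t+1. -/
theorem covers_union_t_intersecting_tau_t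
    (n k l t : ℕ) (hn0 : 0 < n) (ht0 : 0 < t) (hk : t + 1 ≤ k) (hl : t + 1 ≤ l)
    (hn : (t+1)^2 * (k+l)^2 * (k - t + 1) * (l - t + 1) + k + l - t ≤ n)
    (F G : Finset (Finset ℕ))
    (hmax : maximalCrossIn (Iv 1 n) k l t F G)
    (htF : tau n t F = t + 1) (htG : tau n t G = t + 1)
    (hint : crossInt t (covers n t F ∪ covers n t G) (covers n t F ∪ covers n t G))
    (htau : tau n t (covers n t F ∪ covers n t G) = t) :
    t + 2 ≤ k ∧ t + 2 ≤ l ∧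
    (covers n t F).card ≤ k - t + 1 ∧ (covers n t G).card ≤ l - t + 1 := by
  obtain ⟨hF, hG, hcross, _⟩ := hmax
  -- extract a t-set T covering the union of cover families
  have hne : {c : ℕ | ∃ T : Finset ℕ, T ⊆ Finset.Icc 1 n ∧ T.card = c ∧
      ∀ A ∈ covers n t F ∪ covers n t G, t ≤ (T ∩ A).card}.Nonempty := by
    refine ⟨n, Finset.Icc 1 n, subset_rfl, by simp, ?_⟩
    intro A hA
    have hA' : A ⊆ Finset.Icc 1 n ∧ A.card = t + 1 := by
      rcases Finset.mem_union.1 hA with h | h <;>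
        · rw [covers_mem_iff] at h; exact ⟨h.1, h.2.1⟩
    have : Finset.Icc 1 n ∩ A = A := Finset.inter_eq_right.2 hA'.1
    rw [this, hA'.2]; omega
  have hmem := Nat.sInf_mem hne
  have htau' : sInf {c : ℕ | ∃ T : Finset ℕ, T ⊆ Finset.Icc 1 n ∧ T.card = c ∧
      ∀ A ∈ covers n t F ∪ covers n t G, t ≤ (T ∩ A).card} = t := htau
  rw [htau'] at hmem
  obtain ⟨T, hTsub, hTcard, hTcov⟩ := hmem
  have hkey : ∀ C ∈ covers n t F ∪ covers n t G, T ⊆ C := by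
    intro C hC
    have h1 := hTcov C hC
    have h2 : T ∩ C = T := Finset.eq_of_subset_of_card_le Finset.inter_subset_left
      (by rw [hTcard]; exact h1)
    rw [← h2]; exact Finset.inter_subset_right
  -- bad elements of F and G
  have hAF : ∃ A ∈ F, (T ∩ A).card < t := by
    by_contra h
    push_neg at h
    have hm : t ∈ {c : ℕ | ∃ T' : Finset ℕ, T' ⊆ Finset.Icc 1 n ∧ T'.card = c ∧
        ∀ A ∈ F, t ≤ (T' ∩ A).card} := ⟨T, hTsub, hTcard, h⟩
    have hle : tau n t F ≤ t := Nat.sInf_le hm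
    omega
  have hAG : ∃ A ∈ G, (T ∩ A).card < t := by
    by_contra h
    push_neg at h
    have hm : t ∈ {c : ℕ | ∃ T' : Finset ℕ, T' ⊆ Finset.Icc 1 n ∧ T'.card = c ∧
        ∀ A ∈ G, t ≤ (T' ∩ A).card} := ⟨T, hTsub, hTcard, h⟩
    have hle : tau n t G ≤ t := Nat.sInf_le hm
    omega
  obtain ⟨A, hAmem, hAsmall⟩ := hAF
  obtain ⟨B, hBmem, hBsmall⟩ := hAG
  have hAk : A ⊆ Finset.Icc 1 n ∧ A.card = k := by
    have := hF hAmem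
    simp only [ksubsets, Iv, Finset.mem_filter, Finset.mem_powerset] at this
    exact this
  have hBl : B ⊆ Finset.Icc 1 n ∧ B.card = l := by
    have := hG hBmem
    simp only [ksubsets, Iv, Finset.mem_filter, Finset.mem_powerset] at this
    exact this
  have hk2 : t + 2 ≤ k := by
    by_contra hlt
    have hk1 : k = t + 1 := by omega
    have hAcov : A ∈ covers n t G := by
      rw [covers_mem_iff]
      exact ⟨hAk.1, by rw [hAk.2, hk1], fun B' hB' => hcross A hAmem B' hB'⟩
    have := hkey A (Finset.mem_union_right _ hAcov)
    have : T ∩ A = T := Finset.inter_eq_left.2 this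
    rw [this, hTcard] at hAsmall
    omega
  have hl2 : t + 2 ≤ l := by
    by_contra hlt
    have hl1 : l = t + 1 := by omega
    have hBcov : B ∈ covers n t F := by
      rw [covers_mem_iff]
      refine ⟨hBl.1, by rw [hBl.2, hl1], fun A' hA' => ?_⟩
      have := hcross A' hA' B hBmem
      rwa [Finset.inter_comm] at this
    have := hkey B (Finset.mem_union_left _ hBcov)
    have : T ∩ B = T := Finset.inter_eq_left.2 this
    rw [this, hTcard] at hBsmall
    omega
  refine ⟨hk2, hl2, ?_, ?_⟩
  · refine aux_card_bound k t T A hTcard hAk.2 hAsmall (covers n t F)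
      (fun C hC => hkey C (Finset.mem_union_left _ hC))
      (fun C hC => ((covers_mem_iff n t F C).1 hC).2.1)
      (fun C hC => ((covers_mem_iff n t F C).1 hC).2.2 A hAmem)
  · refine aux_card_bound l t T B hTcard hBl.2 hBsmall (covers n t G)
      (fun C hC => hkey C (Finset.mem_union_right _ hC))
      (fun C hC => ((covers_mem_iff n t G C).1 hC).2.1)
      (fun C hC => ((covers_mem_iff n t G C).1 hC).2.2 B hBmem)
end

section
/- Under the standing setup, suppose T_f ∪ T_g is a t-intersecting family with τ_t(T_f ∪ T_g) = t, and that |T_f| = k−t+1 and |T_g| = ℓ−t+1. Set M_f = ⋃_{A∈T_f} A and M_g = ⋃_{B∈T_g} B. Then |M_f ∩ M_g| ≥ t+1; and if |M_f ∩ M_g| = t+1, then |F||G| = (h(k,ℓ,t)−t+1)(h(ℓ,k,t)−t+1), where h(x,y,t) = C(n−t, x−t) − C(n−y−1, x−t) + t. Moreover, if in addition t = 1, then there exist X ⊆ [2,n] with |X| = k, Y ⊆ [2,n] with |Y| = ℓ and |X∩Y| = 1 such that (F,G) is isomorphic to (H(k,1;X,Y), H'(ℓ,1;Y,X)), where H(k,1;X,Y)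 = {F ∈ C([n],k) : 1 ∈ F and |F∩Y| ≥ 1} ∪ {X} and H'(ℓ,1;Y,X) = {G ∈ C([n],ℓ) : 1 ∈ G and |G∩X| ≥ 1} ∪ {Y}. -/
lemma sunflower (T0 : Finset ℕ) (t : ℕ) (H : Finset (Finset ℕ))
    (hT0 : T0.card = t) (hmem : ∀ A ∈ H, T0 ⊆ A ∧ A.card = t + 1) :
    (∀ x ∈ H.biUnion id \ T0, insert x T0 ∈ H) ∧
    (∀ A ∈ H, ∃ x ∈ H.biUnion id \ T0, A = insert x T0) ∧
    (H.biUnion id \ T0).card = H.card := by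
  classical
  have key : ∀ x, x ∈ H.biUnion id \ T0 → ∀ A ∈ H, x ∈ A → A = insert x T0 := by
    intro x hx A hA hxA
    obtain ⟨hT0A, hAc⟩ := hmem A hA
    have hxT0 : x ∉ T0 := (Finset.mem_sdiff.mp hx).2
    have hsub : insert x T0 ⊆ A := Finset.insert_subset hxA hT0A
    have hcard : A.card ≤ (insert x T0).card := by
      rw [Finset.card_insert_of_notMem hxT0, hT0, hAc]
    exact (Finset.eq_of_subset_of_card_le hsub hcard).symm
  have h1 : ∀ x ∈ H.biUnion id \ T0, insert x T0 ∈ H := by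
    intro x hx
    obtain ⟨A, hA, hxA⟩ := Finset.mem_biUnion.mp (Finset.mem_sdiff.mp hx).1
    rw [← key x hx A hA hxA]; exact hA
  have h2 : ∀ A ∈ H, ∃ x ∈ H.biUnion id \ T0, A = insert x T0 := by
    intro A hA
    obtain ⟨hT0A, hAc⟩ := hmem A hA
    have hc1 : (A \ T0).card = 1 := by
      rw [Finset.card_sdiff_of_subset hT0A, hAc, hT0]; omega
    obtain ⟨x, hx⟩ := Finset.card_eq_one.mp hc1
    have hxA : x ∈ A \ T0 := hx ▸ Finset.mem_singleton_self x
    have hxB : x ∈ H.biUnion id \ T0 := Finset.mem_sdiff.mpr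
      ⟨Finset.mem_biUnion.mpr ⟨A, hA, (Finset.mem_sdiff.mp hxA).1⟩, (Finset.mem_sdiff.mp hxA).2⟩
    exact ⟨x, hxB, key x hxB A hA (Finset.mem_sdiff.mp hxA).1⟩
  refine ⟨h1, h2, ?_⟩
  have him : H = (H.biUnion id \ T0).image (fun x => insert x T0) := by
    ext A
    constructor
    · intro hA
      obtain ⟨x, hx, hAe⟩ := h2 A hA
      exact Finset.mem_image.mpr ⟨x, hx, hAe.symm⟩
    · intro hA
      obtain ⟨x, hx, rfl⟩ := Finset.mem_image.mp hA
      exact h1 x hx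
  have hinj : ((H.biUnion id \ T0).image (fun x => insert x T0)).card
      = (H.biUnion id \ T0).card := by
    apply Finset.card_image_of_injOn
    intro x hx y hy hxy
    have hxT0 : x ∉ T0 := (Finset.mem_sdiff.mp hx).2
    simp only at hxy
    have : x ∈ insert y T0 := hxy ▸ Finset.mem_insert_self x T0
    rcases Finset.mem_insert.mp this with h | h
    · exact h
    · exact absurd h hxT0
  exact ((congrArg Finset.card him).trans hinj).symm

lemma count_contain (S T : Finset ℕ) (k : ℕ) (hTS : T ⊆ S) (hTk : T.card ≤ k) :
    ((ksubsets S k).filter (fun A => T ⊆ A)).card = (S.card - T.card).choose (k - T.card) := by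
  classical
  rw [← Finset.card_sdiff_of_subset hTS, ← Finset.card_powersetCard]
  apply Finset.card_bij' (fun A _ => A \ T) (fun P _ => P ∪ T)
  · intro A hA
    simp only [Finset.mem_filter, ksubsets, Finset.mem_powerset] at hA
    obtain ⟨⟨hAS, hAk⟩, hTA⟩ := hA
    rw [Finset.mem_powersetCard]
    exact ⟨Finset.sdiff_subset_sdiff hAS subset_rfl, by rw [Finset.card_sdiff_of_subset hTA, hAk]⟩
  · intro P hP
    rw [Finset.mem_powersetCard] at hP
    obtain ⟨hPS, hPc⟩ := hP
    have hPd : Disjoint P T := (Finset.subset_sdiff.mp hPS).2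
    simp only [Finset.mem_filter, ksubsets, Finset.mem_powerset]
    refine ⟨⟨Finset.union_subset ((Finset.subset_sdiff.mp hPS).1) hTS, ?_⟩, Finset.subset_union_right⟩
    rw [Finset.card_union_of_disjoint hPd, hPc]
    omega
  · intro A hA
    simp only [Finset.mem_filter] at hA
    exact Finset.sdiff_union_of_subset hA.2
  · intro P hP
    rw [Finset.mem_powersetCard] at hP
    have hPd : Disjoint P T := (Finset.subset_sdiff.mp hP.1).2
    rw [Finset.union_sdiff_right, Finset.sdiff_eq_self_of_disjoint hPd]

set_option maxHeartbeats 2000000 in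
/-- Lemma 2.4(ii)/(iia). -/
theorem covers_union_t_intersecting_extremal_cards
    (n k l t : ℕ) (hn0 : 0 < n) (ht0 : 0 < t) (hk : t + 1 ≤ k) (hl : t + 1 ≤ l)
    (hn : (t+1)^2 * (k+l)^2 * (k - t + 1) * (l - t + 1) + k + l - t ≤ n)
    (F G : Finset (Finset ℕ))
    (hmax : maximalCrossIn (Iv 1 n) k l t F G)
    (htF : tau n t F = t + 1) (htG : tau n t G = t + 1)
    (hint : crossInt t (covers n t F ∪ covers n t G) (covers n t F ∪ covers n t G))
    (htau : tau n t (covers n t F ∪ covers n t G) = t)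
    (hcf : (covers n t F).card = k - t + 1)
    (hcg : (covers n t G).card = l - t + 1) :
    t + 1 ≤ (((covers n t F).biUnion id) ∩ ((covers n t G).biUnion id)).card ∧
    ((((covers n t F).biUnion id) ∩ ((covers n t G).biUnion id)).card = t + 1 →
      (F.card : ℤ) * (G.card : ℤ) = (hfun n k l t - t + 1) * (hfun n l k t - t + 1)) ∧
    ((((covers n t F).biUnion id) ∩ ((covers n t G).biUnion id)).card = t + 1 → t = 1 →
      ∃ X Y : Finset ℕ, X ⊆ Iv 2 n ∧ X.card = k ∧ Y ⊆ Iv 2 n ∧ Y.card = l ∧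
        (X ∩ Y).card = 1 ∧ isoPair n F G (famH n k 1 X Y) (famH n l 1 Y X)) := by
  classical
  obtain ⟨hFk, hGl, hcross, hmaxx⟩ := hmax
  have hksubmem : ∀ (S : Finset ℕ) (m : ℕ) (A : Finset ℕ),
      A ∈ ksubsets S m ↔ A ⊆ S ∧ A.card = m := by
    intro S m A; simp [ksubsets]
  have hcovmem : ∀ (Fam : Finset (Finset ℕ)) (T : Finset ℕ),
      T ∈ covers n t Fam ↔ T ⊆ Finset.Icc 1 n ∧ T.card = t + 1 ∧ ∀ A ∈ Fam, t ≤ (T ∩ A).card := by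
    intro Fam T; simp [covers, and_assoc]
  have hIcc : (Finset.Icc 1 n).card = n := by rw [Nat.card_Icc]; omega
  set P := (t+1)^2 * (k+l)^2 * (k - t + 1) * (l - t + 1) with hPdef
  have hP : 0 < P := by
    refine Nat.mul_pos (Nat.mul_pos (Nat.mul_pos ?_ ?_) ?_) ?_ <;>
      first
        | exact pow_pos (by omega) 2
        | omega
  have hnk : k + 2 ≤ n := by omega
  have hnl : l + 2 ≤ n := by omega
  have hnkl : k + l + 1 ≤ n + t := by omega
  -- extract T0
  have hUset : ∃ T : Finset ℕ, T ⊆ Finset.Icc 1 n ∧ T.card = t ∧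
      ∀ A ∈ covers n t F ∪ covers n t G, t ≤ (T ∩ A).card := by
    have hne : {c : ℕ | ∃ T : Finset ℕ, T ⊆ Finset.Icc 1 n ∧ T.card = c ∧
        ∀ A ∈ covers n t F ∪ covers n t G, t ≤ (T ∩ A).card}.Nonempty := by
      refine ⟨n, Finset.Icc 1 n, subset_rfl, hIcc, ?_⟩
      intro A hA
      have hA' : A ⊆ Finset.Icc 1 n ∧ A.card = t + 1 := by
        rcases Finset.mem_union.mp hA with h | h
        · exact ⟨((hcovmem F A).mp h).1, ((hcovmem F A).mp h).2.1⟩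
        · exact ⟨((hcovmem G A).mp h).1, ((hcovmem G A).mp h).2.1⟩
      rw [Finset.inter_eq_right.mpr hA'.1, hA'.2]
      omega
    have hmem := Nat.sInf_mem hne
    unfold tau at htau
    rw [htau] at hmem
    exact hmem
  obtain ⟨T0, hT0I, hT0c, hT0cov⟩ := hUset
  have hT0sub : ∀ A ∈ covers n t F ∪ covers n t G, T0 ⊆ A := by
    intro A hA
    have h1 := hT0cov A hA
    have h2 : T0 ∩ A = T0 := Finset.eq_of_subset_of_card_le Finset.inter_subset_left
      (by rw [hT0c]; exact h1)
    exact Finset.inter_eq_left.mp h2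
  -- sunflower structures
  obtain ⟨Sf, hSfdef⟩ : ∃ S, S = (covers n t F).biUnion id \ T0 := ⟨_, rfl⟩
  obtain ⟨Sg, hSgdef⟩ : ∃ S, S = (covers n t G).biUnion id \ T0 := ⟨_, rfl⟩
  obtain ⟨hSfins, hSfrep, hSfcard0⟩ := sunflower T0 t (covers n t F) hT0c (fun A hA =>
    ⟨hT0sub A (Finset.mem_union_left _ hA), ((hcovmem F A).mp hA).2.1⟩)
  obtain ⟨hSgins, hSgrep, hSgcard0⟩ := sunflower T0 t (covers n t G) hT0c (fun A hA =>
    ⟨hT0sub A (Finset.mem_union_right _ hA), ((hcovmem G A).mp hA).2.1⟩)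
  rw [← hSfdef] at hSfins hSfrep hSfcard0
  rw [← hSgdef] at hSgins hSgrep hSgcard0
  have hSfcard : Sf.card = k - t + 1 := by rw [hSfcard0, hcf]
  have hSgcard : Sg.card = l - t + 1 := by rw [hSgcard0, hcg]
  have hSfd : Disjoint Sf T0 := hSfdef ▸ Finset.sdiff_disjoint
  have hSgd : Disjoint Sg T0 := hSgdef ▸ Finset.sdiff_disjoint
  have hSfI : Sf ⊆ Finset.Icc 1 n := by
    rw [hSfdef]
    intro x hx
    obtain ⟨A, hA, hxA⟩ := Finset.mem_biUnion.mp (Finset.mem_sdiff.mp hx).1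
    exact ((hcovmem F A).mp hA).1 hxA
  have hSgI : Sg ⊆ Finset.Icc 1 n := by
    rw [hSgdef]
    intro x hx
    obtain ⟨A, hA, hxA⟩ := Finset.mem_biUnion.mp (Finset.mem_sdiff.mp hx).1
    exact ((hcovmem G A).mp hA).1 hxA
  have hcovFne : (covers n t F).Nonempty := Finset.card_pos.mp (by rw [hcf]; omega)
  have hcovGne : (covers n t G).Nonempty := Finset.card_pos.mp (by rw [hcg]; omega)
  have hbiF : (covers n t F).biUnion id = T0 ∪ Sf := by
    rw [hSfdef]
    have hT0b : T0 ⊆ (covers n t F).biUnion id := by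
      obtain ⟨A, hA⟩ := hcovFne
      exact (hT0sub A (Finset.mem_union_left _ hA)).trans (Finset.subset_biUnion_of_mem id hA)
    exact (Finset.union_sdiff_of_subset hT0b).symm
  have hbiG : (covers n t G).biUnion id = T0 ∪ Sg := by
    rw [hSgdef]
    have hT0b : T0 ⊆ (covers n t G).biUnion id := by
      obtain ⟨A, hA⟩ := hcovGne
      exact (hT0sub A (Finset.mem_union_right _ hA)).trans (Finset.subset_biUnion_of_mem id hA)
    exact (Finset.union_sdiff_of_subset hT0b).symm
  have hSfapp : ∀ x ∈ Sf, ∀ A ∈ F, t ≤ ((insert x T0) ∩ A).card := by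
    intro x hx A hA
    exact ((hcovmem F _).mp (hSfins x hx)).2.2 A hA
  have hSgapp : ∀ y ∈ Sg, ∀ B ∈ G, t ≤ ((insert y T0) ∩ B).card := by
    intro y hy B hB
    exact ((hcovmem G _).mp (hSgins y hy)).2.2 B hB
  -- split structure
  have hFsplit : ∀ A ∈ F, T0 ⊆ A ∨ (A = Sf ∪ (T0 ∩ A) ∧ (T0 ∩ A).card = t - 1) := by
    intro A hA
    by_cases hTA : T0 ⊆ A
    · exact Or.inl hTA
    · right
      have hAk : A.card = k := ((hksubmem _ _ _).mp (hFk hA)).2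
      have hicard : (T0 ∩ A).card < t := by
        have hne : T0 ∩ A ≠ T0 := fun h => hTA (Finset.inter_eq_left.mp h)
        have := Finset.card_lt_card (Finset.ssubset_iff_subset_ne.mpr
          ⟨Finset.inter_subset_left, hne⟩)
        omega
      have hmain2 : ∀ x ∈ Sf, x ∈ A ∧ (T0 ∩ A).card = t - 1 := by
        intro x hx
        have h1 := hSfapp x hx A hA
        have h2 : (insert x T0) ∩ A ⊆ insert x (T0 ∩ A) := by
          intro y hy
          simp only [Finset.mem_inter, Finset.mem_insert] at hy ⊢
          tauto
        have h3 := (Finset.card_le_card h2).trans (Finset.card_insert_le _ _)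
        constructor
        · by_contra hxA
          have he : (insert x T0) ∩ A = T0 ∩ A := by
            ext y
            simp only [Finset.mem_inter, Finset.mem_insert]
            constructor
            · rintro ⟨h | h, hyA⟩
              · exact absurd (h ▸ hyA) hxA
              · exact ⟨h, hyA⟩
            · rintro ⟨h, hyA⟩; exact ⟨Or.inr h, hyA⟩
          rw [he] at h1
          omega
        · omega
      have hSfA : Sf ⊆ A := fun x hx => (hmain2 x hx).1
      have ht1 : (T0 ∩ A).card = t - 1 := by
        obtain ⟨x, hx⟩ := Finset.card_pos.mp (show 0 < Sf.card by rw [hSfcard]; omega)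
        exact (hmain2 x hx).2
      refine ⟨?_, ht1⟩
      have hsub : Sf ∪ (T0 ∩ A) ⊆ A := Finset.union_subset hSfA Finset.inter_subset_right
      have hdisj : Disjoint Sf (T0 ∩ A) := hSfd.mono_right Finset.inter_subset_left
      have hcard : A.card ≤ (Sf ∪ (T0 ∩ A)).card := by
        rw [Finset.card_union_of_disjoint hdisj, hSfcard, ht1, hAk]; omega
      exact (Finset.eq_of_subset_of_card_le hsub hcard).symm
  have hGsplit : ∀ B ∈ G, T0 ⊆ B ∨ (B = Sg ∪ (T0 ∩ B) ∧ (T0 ∩ B).card = t - 1) := by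
    intro B hB
    by_cases hTB : T0 ⊆ B
    · exact Or.inl hTB
    · right
      have hBl : B.card = l := ((hksubmem _ _ _).mp (hGl hB)).2
      have hicard : (T0 ∩ B).card < t := by
        have hne : T0 ∩ B ≠ T0 := fun h => hTB (Finset.inter_eq_left.mp h)
        have := Finset.card_lt_card (Finset.ssubset_iff_subset_ne.mpr
          ⟨Finset.inter_subset_left, hne⟩)
        omega
      have hmain2 : ∀ y ∈ Sg, y ∈ B ∧ (T0 ∩ B).card = t - 1 := by
        intro y hy
        have h1 : t ≤ ((insert y T0) ∩ B).card := by
          have := ((hcovmem G _).mp (hSgins y hy)).2.2 B hB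
          exact this
        have h2 : (insert y T0) ∩ B ⊆ insert y (T0 ∩ B) := by
          intro x hx
          simp only [Finset.mem_inter, Finset.mem_insert] at hx ⊢
          tauto
        have h3 := (Finset.card_le_card h2).trans (Finset.card_insert_le _ _)
        constructor
        · by_contra hyB
          have he : (insert y T0) ∩ B = T0 ∩ B := by
            ext x
            simp only [Finset.mem_inter, Finset.mem_insert]
            constructor
            · rintro ⟨h | h, hxB⟩
              · exact absurd (h ▸ hxB) hyB
              · exact ⟨h, hxB⟩
            · rintro ⟨h, hxB⟩; exact ⟨Or.inr h, hxB⟩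
          rw [he] at h1
          omega
        · omega
      have hSgB : Sg ⊆ B := fun y hy => (hmain2 y hy).1
      have ht1 : (T0 ∩ B).card = t - 1 := by
        obtain ⟨y, hy⟩ := Finset.card_pos.mp (show 0 < Sg.card by rw [hSgcard]; omega)
        exact (hmain2 y hy).2
      refine ⟨?_, ht1⟩
      have hsub : Sg ∪ (T0 ∩ B) ⊆ B := Finset.union_subset hSgB Finset.inter_subset_right
      have hdisj : Disjoint Sg (T0 ∩ B) := hSgd.mono_right Finset.inter_subset_left
      have hcard : B.card ≤ (Sg ∪ (T0 ∩ B)).card := by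
        rw [Finset.card_union_of_disjoint hdisj, hSgcard, ht1, hBl]; omega
      exact (Finset.eq_of_subset_of_card_le hsub hcard).symm
  -- existence of members not containing T0
  have hFex : ∃ A ∈ F, ¬ T0 ⊆ A := by
    by_contra hcon
    push_neg at hcon
    have hinj : Set.InjOn (fun x => insert x T0) ↑(Finset.Icc 1 n \ T0) := by
      intro x hx y hy hxy
      have hxT : x ∉ T0 := (Finset.mem_sdiff.mp hx).2
      simp only at hxy
      have : x ∈ insert y T0 := hxy ▸ Finset.mem_insert_self x T0
      rcases Finset.mem_insert.mp this with h | h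
      · exact h
      · exact absurd h hxT
    have hsub : (Finset.Icc 1 n \ T0).image (fun x => insert x T0) ⊆ covers n t F := by
      intro T hT
      obtain ⟨x, hx, rfl⟩ := Finset.mem_image.mp hT
      obtain ⟨hxI, hxT⟩ := Finset.mem_sdiff.mp hx
      rw [hcovmem]
      refine ⟨Finset.insert_subset hxI hT0I,
        by rw [Finset.card_insert_of_notMem hxT, hT0c], ?_⟩
      intro A hA
      have hss : T0 ⊆ insert x T0 ∩ A :=
        Finset.subset_inter (Finset.subset_insert _ _) (hcon A hA)
      calc t = T0.card := hT0c.symm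
        _ ≤ _ := Finset.card_le_card hss
    have hc1 := Finset.card_le_card hsub
    rw [Finset.card_image_of_injOn hinj, hcf, Finset.card_sdiff_of_subset hT0I, hIcc, hT0c] at hc1
    omega
  have hGex : ∃ B ∈ G, ¬ T0 ⊆ B := by
    by_contra hcon
    push_neg at hcon
    have hinj : Set.InjOn (fun x => insert x T0) ↑(Finset.Icc 1 n \ T0) := by
      intro x hx y hy hxy
      have hxT : x ∉ T0 := (Finset.mem_sdiff.mp hx).2
      simp only at hxy
      have : x ∈ insert y T0 := hxy ▸ Finset.mem_insert_self x T0
      rcases Finset.mem_insert.mp this with h | h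
      · exact h
      · exact absurd h hxT
    have hsub : (Finset.Icc 1 n \ T0).image (fun x => insert x T0) ⊆ covers n t G := by
      intro T hT
      obtain ⟨x, hx, rfl⟩ := Finset.mem_image.mp hT
      obtain ⟨hxI, hxT⟩ := Finset.mem_sdiff.mp hx
      rw [hcovmem]
      refine ⟨Finset.insert_subset hxI hT0I,
        by rw [Finset.card_insert_of_notMem hxT, hT0c], ?_⟩
      intro B hB
      have hss : T0 ⊆ insert x T0 ∩ B :=
        Finset.subset_inter (Finset.subset_insert _ _) (hcon B hB)
      calc t = T0.card := hT0c.symm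
        _ ≤ _ := Finset.card_le_card hss
    have hc1 := Finset.card_le_card hsub
    rw [Finset.card_image_of_injOn hinj, hcg, Finset.card_sdiff_of_subset hT0I, hIcc, hT0c] at hc1
    omega
  obtain ⟨A1, hA1F, hA1n⟩ := hFex
  obtain ⟨B0, hB0G, hB0n⟩ := hGex
  obtain ⟨hA1eq, hA1card⟩ := (hFsplit A1 hA1F).resolve_left hA1n
  obtain ⟨hB0eq, hB0card⟩ := (hGsplit B0 hB0G).resolve_left hB0n
  -- part 1 core
  have hSfgne : (Sf ∩ Sg).Nonempty := by
    by_contra hcon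
    rw [Finset.not_nonempty_iff_eq_empty] at hcon
    have h := hcross A1 hA1F B0 hB0G
    have hsub : A1 ∩ B0 ⊆ T0 ∩ A1 := by
      intro x hx
      obtain ⟨hx1, hx2⟩ := Finset.mem_inter.mp hx
      rw [hA1eq] at hx1
      rw [hB0eq] at hx2
      rcases Finset.mem_union.mp hx1 with h1 | h1
      · rcases Finset.mem_union.mp hx2 with h2 | h2
        · exact absurd (Finset.mem_inter.mpr ⟨h1, h2⟩)
            (by rw [hcon]; exact Finset.notMem_empty x)
        · exact absurd (Finset.mem_inter.mp h2).1 (Finset.disjoint_left.mp hSfd h1)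
      · exact h1
    have := Finset.card_le_card hsub
    omega
  have hMM : ((covers n t F).biUnion id) ∩ ((covers n t G).biUnion id) = T0 ∪ (Sf ∩ Sg) := by
    rw [hbiF, hbiG]
    ext x
    simp only [Finset.mem_inter, Finset.mem_union]
    tauto
  have hdT : Disjoint T0 (Sf ∩ Sg) := hSfd.symm.mono_right Finset.inter_subset_left
  have hMMc : (((covers n t F).biUnion id) ∩ ((covers n t G).biUnion id)).card
      = t + (Sf ∩ Sg).card := by
    rw [hMM, Finset.card_union_of_disjoint hdT, hT0c]
  -- reverse inclusions via maximality
  have hFback : ∀ A, A ∈ ksubsets (Iv 1 n) k → T0 ⊆ A → (A ∩ Sg).Nonempty → A ∈ F := by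
    intro A hAk hTA hne
    obtain ⟨y, hy⟩ := hne
    obtain ⟨hy1, hy2⟩ := Finset.mem_inter.mp hy
    have hcov : ∀ B ∈ G, t ≤ (A ∩ B).card := by
      intro B hB
      have h1 := hSgapp y hy2 B hB
      have h2 : insert y T0 ∩ B ⊆ A ∩ B :=
        Finset.inter_subset_inter (Finset.insert_subset hy1 hTA) subset_rfl
      exact h1.trans (Finset.card_le_card h2)
    have hres := hmaxx (insert A F) G
      (by intro X hX
          rcases Finset.mem_insert.mp hX with rfl | hX'
          · exact hAk
          · exact hFk hX')
      hGl
      (by intro X hX B hB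
          rcases Finset.mem_insert.mp hX with rfl | hX'
          · exact hcov B hB
          · exact hcross X hX' B hB)
      (Finset.subset_insert _ _) subset_rfl
    rw [hres.1]
    exact Finset.mem_insert_self _ _
  have hGback : ∀ B, B ∈ ksubsets (Iv 1 n) l → T0 ⊆ B → (B ∩ Sf).Nonempty → B ∈ G := by
    intro B hBl hTB hne
    obtain ⟨x, hx⟩ := hne
    obtain ⟨hx1, hx2⟩ := Finset.mem_inter.mp hx
    have hcov : ∀ A ∈ F, t ≤ (A ∩ B).card := by
      intro A hA
      have h1 := hSfapp x hx2 A hA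
      have h2 : insert x T0 ∩ A ⊆ B ∩ A :=
        Finset.inter_subset_inter (Finset.insert_subset hx1 hTB) subset_rfl
      rw [Finset.inter_comm]
      exact h1.trans (Finset.card_le_card h2)
    have hres := hmaxx F (insert B G) hFk
      (by intro X hX
          rcases Finset.mem_insert.mp hX with rfl | hX'
          · exact hBl
          · exact hGl hX')
      (by intro A hA X hX
          rcases Finset.mem_insert.mp hX with rfl | hX'
          · exact hcov A hA
          · exact hcross A hA X hX')
      subset_rfl (Finset.subset_insert _ _)
    rw [hres.2]
    exact Finset.mem_insert_self _ _
  -- main conditional structure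
  have hmain : (((covers n t F).biUnion id) ∩ ((covers n t G).biUnion id)).card = t + 1 →
      F = (ksubsets (Iv 1 n) k).filter (fun A => T0 ⊆ A ∧ (A ∩ Sg).Nonempty)
          ∪ {Sf ∪ (T0 ∩ B0)} ∧
      G = (ksubsets (Iv 1 n) l).filter (fun B => T0 ⊆ B ∧ (B ∩ Sf).Nonempty)
          ∪ {Sg ∪ (T0 ∩ B0)} := by
    intro hc
    have hz1 : (Sf ∩ Sg).card = 1 := by rw [hMMc] at hc; omega
    obtain ⟨z, hz⟩ := Finset.card_eq_one.mp hz1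
    have hzs : Sg ∩ Sf = {z} := by rw [Finset.inter_comm]; exact hz
    have chase : ∀ (X Y eX eY : Finset ℕ), Disjoint X T0 → Disjoint Y T0 →
        X ∩ Y = {z} → eX ⊆ T0 → eY ⊆ T0 → eX.card = t - 1 → eY.card = t - 1 →
        t ≤ ((X ∪ eX) ∩ (Y ∪ eY)).card → eX = eY := by
      intro X Y eX eY hdX hdY hXY heX heY hcX hcY hle
      have hsub : (X ∪ eX) ∩ (Y ∪ eY) ⊆ insert z (eX ∩ eY) := by
        intro x hx
        obtain ⟨hx1, hx2⟩ := Finset.mem_inter.mp hx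
        rcases Finset.mem_union.mp hx1 with h1 | h1
        · rcases Finset.mem_union.mp hx2 with h2 | h2
          · have hxz : x ∈ X ∩ Y := Finset.mem_inter.mpr ⟨h1, h2⟩
            rw [hXY] at hxz
            exact Finset.mem_insert.mpr (Or.inl (Finset.mem_singleton.mp hxz))
          · exact absurd (heY h2) (Finset.disjoint_left.mp hdX h1)
        · rcases Finset.mem_union.mp hx2 with h2 | h2
          · exact absurd (heX h1) (Finset.disjoint_left.mp hdY h2)
          · exact Finset.mem_insert.mpr (Or.inr (Finset.mem_inter.mpr ⟨h1, h2⟩))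
      have h1 := (Finset.card_le_card hsub).trans (Finset.card_insert_le _ _)
      have hceXY : (eX ∩ eY).card ≤ eX.card := Finset.card_le_card Finset.inter_subset_left
      have h2 : eX ∩ eY = eX := Finset.eq_of_subset_of_card_le Finset.inter_subset_left
        (by omega)
      have h3 : eX ∩ eY = eY := Finset.eq_of_subset_of_card_le Finset.inter_subset_right
        (by omega)
      exact h2.symm.trans h3
    have heBsub : T0 ∩ B0 ⊆ T0 := Finset.inter_subset_left
    have hclaimF : ∀ A ∈ F, ¬ T0 ⊆ A → A = Sf ∪ (T0 ∩ B0) := by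
      intro A hA hnT
      obtain ⟨hAeq, hAcard⟩ := (hFsplit A hA).resolve_left hnT
      have hx := hcross A hA B0 hB0G
      rw [hAeq] at hx
      rw [hB0eq] at hx
      have heq := chase Sf Sg (T0 ∩ A) (T0 ∩ B0) hSfd hSgd hz
        Finset.inter_subset_left heBsub hAcard hB0card hx
      rw [hAeq, heq]
    have hA0F : Sf ∪ (T0 ∩ B0) ∈ F := by
      rw [← hclaimF A1 hA1F hA1n]; exact hA1F
    have hclaimG : ∀ B ∈ G, ¬ T0 ⊆ B → B = Sg ∪ (T0 ∩ B0) := by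
      intro B hB hnT
      obtain ⟨hBeq, hBcard⟩ := (hGsplit B hB).resolve_left hnT
      have hx := hcross (Sf ∪ (T0 ∩ B0)) hA0F B hB
      rw [hBeq] at hx
      rw [Finset.inter_comm] at hx
      have heq := chase Sg Sf (T0 ∩ B) (T0 ∩ B0) hSgd hSfd hzs
        Finset.inter_subset_left heBsub hBcard hB0card hx
      rw [hBeq, heq]
    have hF0 : ∀ A ∈ F, T0 ⊆ A → (A ∩ Sg).Nonempty := by
      intro A hA hTA
      by_contra hcon
      rw [Finset.not_nonempty_iff_eq_empty] at hcon
      have hx := hcross A hA B0 hB0G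
      have hsub : A ∩ B0 ⊆ T0 ∩ B0 := by
        intro x hxm
        obtain ⟨h1, h2⟩ := Finset.mem_inter.mp hxm
        have h2' := h2
        rw [hB0eq] at h2'
        rcases Finset.mem_union.mp h2' with h3 | h3
        · exact absurd (Finset.mem_inter.mpr ⟨h1, h3⟩)
            (by rw [hcon]; exact Finset.notMem_empty x)
        · exact h3
      have := Finset.card_le_card hsub
      omega
    have hG0 : ∀ B ∈ G, T0 ⊆ B → (B ∩ Sf).Nonempty := by
      intro B hB hTB
      by_contra hcon
      rw [Finset.not_nonempty_iff_eq_empty] at hcon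
      have hx := hcross (Sf ∪ (T0 ∩ B0)) hA0F B hB
      have hsub : (Sf ∪ (T0 ∩ B0)) ∩ B ⊆ T0 ∩ B0 := by
        intro x hxm
        obtain ⟨h1, h2⟩ := Finset.mem_inter.mp hxm
        rcases Finset.mem_union.mp h1 with h3 | h3
        · exact absurd (Finset.mem_inter.mpr ⟨h2, h3⟩)
            (by rw [hcon]; exact Finset.notMem_empty x)
        · exact h3
      have := Finset.card_le_card hsub
      omega
    constructor
    · ext A
      simp only [Finset.mem_union, Finset.mem_filter, Finset.mem_singleton]
      constructor
      · intro hA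
        by_cases hTA : T0 ⊆ A
        · exact Or.inl ⟨hFk hA, hTA, hF0 A hA hTA⟩
        · exact Or.inr (hclaimF A hA hTA)
      · rintro (⟨h1, h2, h3⟩ | rfl)
        · exact hFback A h1 h2 h3
        · exact hA0F
    · ext B
      simp only [Finset.mem_union, Finset.mem_filter, Finset.mem_singleton]
      constructor
      · intro hB
        by_cases hTB : T0 ⊆ B
        · exact Or.inl ⟨hGl hB, hTB, hG0 B hB hTB⟩
        · exact Or.inr (hclaimG B hB hTB)
      · rintro (⟨h1, h2, h3⟩ | rfl)
        · exact hGback B h1 h2 h3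
        · rw [← hB0eq]; exact hB0G
  refine ⟨?_, ?_, ?_⟩
  · rw [hMMc]
    have := Finset.card_pos.mpr hSfgne
    omega
  · -- counting part
    intro hc
    obtain ⟨hFeq, hGeq⟩ := hmain hc
    have hT0Iv : T0 ⊆ Iv 1 n := hT0I
    have hIvcard : (Iv 1 n).card = n := hIcc
    have hcall : ((ksubsets (Iv 1 n) k).filter (fun A => T0 ⊆ A)).card
        = (n - t).choose (k - t) := by
      rw [count_contain (Iv 1 n) T0 k hT0Iv (by rw [hT0c]; omega), hIvcard, hT0c]
    have hcallG : ((ksubsets (Iv 1 n) l).filter (fun B => T0 ⊆ B)).card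
        = (n - t).choose (l - t) := by
      rw [count_contain (Iv 1 n) T0 l hT0Iv (by rw [hT0c]; omega), hIvcard, hT0c]
    have heq2 : (ksubsets (Iv 1 n) k).filter (fun A => T0 ⊆ A ∧ A ∩ Sg = ∅)
        = (ksubsets ((Iv 1 n) \ Sg) k).filter (fun A => T0 ⊆ A) := by
      ext A
      simp only [Finset.mem_filter, hksubmem, Finset.subset_sdiff]
      constructor
      · rintro ⟨⟨h1, h2⟩, h3, h4⟩
        exact ⟨⟨⟨h1, Finset.disjoint_iff_inter_eq_empty.mpr h4⟩, h2⟩, h3⟩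
      · rintro ⟨⟨⟨h1, h4⟩, h2⟩, h3⟩
        exact ⟨⟨h1, h2⟩, h3, Finset.disjoint_iff_inter_eq_empty.mp h4⟩
    have heq2G : (ksubsets (Iv 1 n) l).filter (fun B => T0 ⊆ B ∧ B ∩ Sf = ∅)
        = (ksubsets ((Iv 1 n) \ Sf) l).filter (fun B => T0 ⊆ B) := by
      ext B
      simp only [Finset.mem_filter, hksubmem, Finset.subset_sdiff]
      constructor
      · rintro ⟨⟨h1, h2⟩, h3, h4⟩
        exact ⟨⟨⟨h1, Finset.disjoint_iff_inter_eq_empty.mpr h4⟩, h2⟩, h3⟩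
      · rintro ⟨⟨⟨h1, h4⟩, h2⟩, h3⟩
        exact ⟨⟨h1, h2⟩, h3, Finset.disjoint_iff_inter_eq_empty.mp h4⟩
    have hcdis : ((ksubsets (Iv 1 n) k).filter (fun A => T0 ⊆ A ∧ A ∩ Sg = ∅)).card
        = (n - l - 1).choose (k - t) := by
      rw [heq2, count_contain ((Iv 1 n) \ Sg) T0 k
        (Finset.subset_sdiff.mpr ⟨hT0Iv, hSgd.symm⟩) (by rw [hT0c]; omega)]
      rw [Finset.card_sdiff_of_subset (show Sg ⊆ Iv 1 n from hSgI), hIvcard, hSgcard, hT0c]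
      congr 1
      omega
    have hcdisG : ((ksubsets (Iv 1 n) l).filter (fun B => T0 ⊆ B ∧ B ∩ Sf = ∅)).card
        = (n - k - 1).choose (l - t) := by
      rw [heq2G, count_contain ((Iv 1 n) \ Sf) T0 l
        (Finset.subset_sdiff.mpr ⟨hT0Iv, hSfd.symm⟩) (by rw [hT0c]; omega)]
      rw [Finset.card_sdiff_of_subset (show Sf ⊆ Iv 1 n from hSfI), hIvcard, hSfcard, hT0c]
      congr 1
      omega
    have hpart := Finset.card_filter_add_card_filter_not
      (s := (ksubsets (Iv 1 n) k).filter (fun A => T0 ⊆ A)) (p := fun A => (A ∩ Sg).Nonempty)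
    have hpartG := Finset.card_filter_add_card_filter_not
      (s := (ksubsets (Iv 1 n) l).filter (fun B => T0 ⊆ B)) (p := fun B => (B ∩ Sf).Nonempty)
    rw [Finset.filter_filter, Finset.filter_filter] at hpart
    rw [Finset.filter_filter, Finset.filter_filter] at hpartG
    have hnne : (ksubsets (Iv 1 n) k).filter (fun A => T0 ⊆ A ∧ ¬(A ∩ Sg).Nonempty)
        = (ksubsets (Iv 1 n) k).filter (fun A => T0 ⊆ A ∧ A ∩ Sg = ∅) := by
      simp only [Finset.not_nonempty_iff_eq_empty]
    have hnneG : (ksubsets (Iv 1 n) l).filter (fun B => T0 ⊆ B ∧ ¬(B ∩ Sf).Nonempty)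
        = (ksubsets (Iv 1 n) l).filter (fun B => T0 ⊆ B ∧ B ∩ Sf = ∅) := by
      simp only [Finset.not_nonempty_iff_eq_empty]
    rw [hnne, hcall, hcdis] at hpart
    rw [hnneG, hcallG, hcdisG] at hpartG
    have hnotin : ¬ T0 ⊆ Sf ∪ (T0 ∩ B0) := by
      intro hsub'
      have hTe : T0 ⊆ T0 ∩ B0 := by
        intro i hi
        rcases Finset.mem_union.mp (hsub' hi) with h | h
        · exact absurd hi (Finset.disjoint_left.mp hSfd h)
        · exact h
      have := Finset.card_le_card hTe
      omega
    have hnotinG : ¬ T0 ⊆ Sg ∪ (T0 ∩ B0) := by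
      intro hsub'
      have hTe : T0 ⊆ T0 ∩ B0 := by
        intro i hi
        rcases Finset.mem_union.mp (hsub' hi) with h | h
        · exact absurd hi (Finset.disjoint_left.mp hSgd h)
        · exact h
      have := Finset.card_le_card hTe
      omega
    have hdisj1 : Disjoint ((ksubsets (Iv 1 n) k).filter (fun A => T0 ⊆ A ∧ (A ∩ Sg).Nonempty))
        {Sf ∪ (T0 ∩ B0)} := by
      rw [Finset.disjoint_singleton_right, Finset.mem_filter]
      rintro ⟨-, h, -⟩
      exact hnotin h
    have hdisj1G : Disjoint ((ksubsets (Iv 1 n) l).filter (fun B => T0 ⊆ B ∧ (B ∩ Sf).Nonempty))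
        {Sg ∪ (T0 ∩ B0)} := by
      rw [Finset.disjoint_singleton_right, Finset.mem_filter]
      rintro ⟨-, h, -⟩
      exact hnotinG h
    have hcF : F.card + (n - l - 1).choose (k - t) = (n - t).choose (k - t) + 1 := by
      rw [hFeq, Finset.card_union_of_disjoint hdisj1, Finset.card_singleton]
      omega
    have hcG : G.card + (n - k - 1).choose (l - t) = (n - t).choose (l - t) + 1 := by
      rw [hGeq, Finset.card_union_of_disjoint hdisj1G, Finset.card_singleton]
      omega
    have hch1 : ch ((n:ℤ) - (t:ℤ)) ((k:ℤ) - (t:ℤ)) = ((n - t).choose (k - t) : ℤ) := by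
      simp only [ch]
      rw [if_pos (show (0:ℤ) ≤ (k:ℤ) - (t:ℤ) ∧ (k:ℤ) - (t:ℤ) ≤ (n:ℤ) - (t:ℤ) by
        constructor <;> omega)]
      have e1 : ((n:ℤ) - (t:ℤ)).toNat = n - t := by omega
      have e2 : ((k:ℤ) - (t:ℤ)).toNat = k - t := by omega
      rw [e1, e2]
    have hch2 : ch ((n:ℤ) - (l:ℤ) - 1) ((k:ℤ) - (t:ℤ)) = ((n - l - 1).choose (k - t) : ℤ) := by
      simp only [ch]
      rw [if_pos (show (0:ℤ) ≤ (k:ℤ) - (t:ℤ) ∧ (k:ℤ) - (t:ℤ) ≤ (n:ℤ) - (l:ℤ) - 1 by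
        constructor <;> omega)]
      have e1 : ((n:ℤ) - (l:ℤ) - 1).toNat = n - l - 1 := by omega
      have e2 : ((k:ℤ) - (t:ℤ)).toNat = k - t := by omega
      rw [e1, e2]
    have hch3 : ch ((n:ℤ) - (t:ℤ)) ((l:ℤ) - (t:ℤ)) = ((n - t).choose (l - t) : ℤ) := by
      simp only [ch]
      rw [if_pos (show (0:ℤ) ≤ (l:ℤ) - (t:ℤ) ∧ (l:ℤ) - (t:ℤ) ≤ (n:ℤ) - (t:ℤ) by
        constructor <;> omega)]
      have e1 : ((n:ℤ) - (t:ℤ)).toNat = n - t := by omega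
      have e2 : ((l:ℤ) - (t:ℤ)).toNat = l - t := by omega
      rw [e1, e2]
    have hch4 : ch ((n:ℤ) - (k:ℤ) - 1) ((l:ℤ) - (t:ℤ)) = ((n - k - 1).choose (l - t) : ℤ) := by
      simp only [ch]
      rw [if_pos (show (0:ℤ) ≤ (l:ℤ) - (t:ℤ) ∧ (l:ℤ) - (t:ℤ) ≤ (n:ℤ) - (k:ℤ) - 1 by
        constructor <;> omega)]
      have e1 : ((n:ℤ) - (k:ℤ) - 1).toNat = n - k - 1 := by omega
      have e2 : ((l:ℤ) - (t:ℤ)).toNat = l - t := by omega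
      rw [e1, e2]
    have hFc : (F.card : ℤ)
        = ((n - t).choose (k - t) : ℤ) - ((n - l - 1).choose (k - t) : ℤ) + 1 := by
      have h' : (F.card : ℤ) + ((n - l - 1).choose (k - t) : ℤ)
          = ((n - t).choose (k - t) : ℤ) + 1 := by exact_mod_cast hcF
      linarith
    have hGc' : (G.card : ℤ)
        = ((n - t).choose (l - t) : ℤ) - ((n - k - 1).choose (l - t) : ℤ) + 1 := by
      have h' : (G.card : ℤ) + ((n - k - 1).choose (l - t) : ℤ)
          = ((n - t).choose (l - t) : ℤ) + 1 := by exact_mod_cast hcG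
      linarith
    simp only [hfun]
    rw [hch1, hch2, hch3, hch4, hFc, hGc']
    ring
  · -- isomorphism part
    intro hc ht1
    obtain ⟨hFeq, hGeq⟩ := hmain hc
    have hz1 : (Sf ∩ Sg).card = 1 := by rw [hMMc] at hc; omega
    subst ht1
    have he0 : T0 ∩ B0 = ∅ := Finset.card_eq_zero.mp (by omega)
    rw [he0, Finset.union_empty] at hFeq hGeq
    obtain ⟨a, ha⟩ := Finset.card_eq_one.mp hT0c
    have haI : a ∈ Finset.Icc 1 n := hT0I (by rw [ha]; exact Finset.mem_singleton_self a)
    have h1I : (1:ℕ) ∈ Finset.Icc 1 n := Finset.mem_Icc.mpr ⟨le_refl 1, hn0⟩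
    set σ := Equiv.swap 1 a with hσdef
    have hσinv : ∀ x, σ (σ x) = x := fun x => Equiv.swap_apply_self 1 a x
    have hinj : Function.Injective (σ : ℕ → ℕ) := σ.injective
    have himg2 : ∀ S : Finset ℕ, (S.image σ).image σ = S := by
      intro S
      rw [Finset.image_image]
      have hcomp : (σ : ℕ → ℕ) ∘ (σ : ℕ → ℕ) = id := funext hσinv
      rw [hcomp, Finset.image_id]
    have hpermOn : permOn n σ := by
      intro x hx
      rcases eq_or_ne x 1 with rfl | hx1
      · rw [hσdef, Equiv.swap_apply_left]; exact haI
      · rcases eq_or_ne x a with rfl | hxa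
        · rw [hσdef, Equiv.swap_apply_right]; exact h1I
        · rw [hσdef, Equiv.swap_apply_of_ne_of_ne hx1 hxa]; exact hx
    have hmemmap : ∀ (H : Finset (Finset ℕ)) (B : Finset ℕ), B ∈ mapFam σ H ↔ B.image σ ∈ H := by
      intro H B
      simp only [mapFam, Finset.mem_image]
      constructor
      · rintro ⟨A, hA, rfl⟩
        rw [himg2]; exact hA
      · intro h
        exact ⟨B.image σ, h, himg2 B⟩
    have hIccim : (Finset.Icc 1 n).image σ = Finset.Icc 1 n := by
      apply Finset.eq_of_subset_of_card_le
      · intro y hy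
        obtain ⟨x, hx, rfl⟩ := Finset.mem_image.mp hy
        exact hpermOn x hx
      · rw [Finset.card_image_of_injective _ hinj]
    have hsubim : ∀ S : Finset ℕ, S.image σ ⊆ Finset.Icc 1 n ↔ S ⊆ Finset.Icc 1 n := by
      intro S
      constructor
      · intro h
        have h2 := Finset.image_subset_image (f := σ) h
        rw [himg2, hIccim] at h2
        exact h2
      · intro h
        rw [← hIccim]
        exact Finset.image_subset_image h
    have hksubim : ∀ (m : ℕ) (B : Finset ℕ),
        B.image σ ∈ ksubsets (Iv 1 n) m ↔ B ∈ ksubsets (Iv 1 n) m := by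
      intro m B
      rw [hksubmem, hksubmem]
      have hcc : (B.image σ).card = B.card := Finset.card_image_of_injective _ hinj
      constructor
      · rintro ⟨h1, h2⟩
        exact ⟨(hsubim B).mp h1, by omega⟩
      · rintro ⟨h1, h2⟩
        exact ⟨(hsubim B).mpr h1, by omega⟩
    have hmem1 : ∀ B : Finset ℕ, a ∈ B.image σ ↔ 1 ∈ B := by
      intro B
      constructor
      · intro h
        obtain ⟨y, hy, hyx⟩ := Finset.mem_image.mp h
        have hy1 : y = 1 := by
          have h3 := congrArg σ hyx
          rw [hσinv] at h3
          rw [h3, hσdef, Equiv.swap_apply_right]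
        rwa [hy1] at hy
      · intro h
        have h3 : a = σ 1 := by rw [hσdef, Equiv.swap_apply_left]
        rw [h3]
        exact Finset.mem_image_of_mem σ h
    have hinterim : ∀ B S : Finset ℕ, B.image σ ∩ S = (B ∩ S.image σ).image σ := by
      intro B S
      rw [Finset.image_inter _ _ hinj, himg2]
    have himeq : ∀ B S : Finset ℕ, (B.image σ = S) ↔ (B = S.image σ) := by
      intro B S
      constructor
      · intro h; rw [← h, himg2]
      · intro h; rw [h, himg2]
    have hXsub : ∀ S : Finset ℕ, S ⊆ Finset.Icc 1 n → Disjoint S T0 → S.image σ ⊆ Iv 2 n := by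
      intro S hSI hSd y hy
      obtain ⟨x, hx, rfl⟩ := Finset.mem_image.mp hy
      have hxa : x ≠ a := by
        intro h
        exact Finset.disjoint_left.mp hSd hx (by rw [ha, h]; exact Finset.mem_singleton_self a)
      have hxI := Finset.mem_Icc.mp (hSI hx)
      show σ x ∈ Finset.Icc 2 n
      rcases eq_or_ne x 1 with rfl | hx1
      · rw [hσdef, Equiv.swap_apply_left]
        have haI' := Finset.mem_Icc.mp haI
        have ha1 : a ≠ 1 := fun h => hxa h.symm
        rw [Finset.mem_Icc]
        omega
      · rw [hσdef, Equiv.swap_apply_of_ne_of_ne hx1 hxa, Finset.mem_Icc]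
        omega
    have hIv11 : Iv 1 1 = {1} := by simp [Iv]
    have hfam : ∀ (m : ℕ) (S1 S2 : Finset ℕ) (H : Finset (Finset ℕ)),
        S1.image σ ⊆ Iv 2 n →
        H = (ksubsets (Iv 1 n) m).filter (fun A => T0 ⊆ A ∧ (A ∩ S2).Nonempty) ∪ {S1} →
        mapFam σ H = famH n m 1 (S1.image σ) (S2.image σ) := by
      intro m S1 S2 H hS1 hH
      have h1X : (1:ℕ) ∉ S1.image σ := by
        intro h
        have h2 : (1:ℕ) ∈ Finset.Icc 2 n := hS1 h
        have := Finset.mem_Icc.mp h2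
        omega
      have hXer : ((S1.image σ ∪ ({1} : Finset ℕ))).erase 1 = S1.image σ := by
        ext x
        simp only [Finset.mem_erase, Finset.mem_union, Finset.mem_singleton]
        constructor
        · rintro ⟨hne, h | h⟩
          · exact h
          · exact absurd h hne
        · intro h
          exact ⟨fun he => h1X (he ▸ h), Or.inl h⟩
      ext B
      rw [hmemmap, hH]
      simp only [famH, Finset.mem_union, Finset.mem_filter, Finset.mem_singleton, hIv11,
        Finset.image_singleton, Finset.singleton_subset_iff]
      rw [hXer]
      constructor
      · rintro (⟨h1, h2, h3⟩ | h4)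
        · left
          refine ⟨(hksubim m B).mp h1, ?_, ?_⟩
          · have h5 : a ∈ B.image σ := h2 (by rw [ha]; exact Finset.mem_singleton_self a)
            exact (hmem1 B).mp h5
          · rw [hinterim] at h3
            exact Finset.card_pos.mpr (Finset.image_nonempty.mp h3)
        · right
          exact (himeq B S1).mp h4
      · rintro (⟨h1, h2, h3⟩ | h4)
        · left
          refine ⟨(hksubim m B).mpr h1, ?_, ?_⟩
          · rw [ha, Finset.singleton_subset_iff]
            exact (hmem1 B).mpr h2
          · rw [hinterim]
            exact Finset.image_nonempty.mpr (Finset.card_pos.mp h3)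
        · right
          exact (himeq B S1).mpr h4
    refine ⟨Sf.image σ, Sg.image σ, hXsub Sf hSfI hSfd, ?_, hXsub Sg hSgI hSgd, ?_, ?_, ?_⟩
    · rw [Finset.card_image_of_injective _ hinj, hSfcard]
      omega
    · rw [Finset.card_image_of_injective _ hinj, hSgcard]
      omega
    · rw [← Finset.image_inter _ _ hinj, Finset.card_image_of_injective _ hinj]
      exact hz1
    · exact ⟨σ, hpermOn, hfam k Sf Sg F (hXsub Sf hSfI hSfd) hFeq,
        hfam l Sg Sf G (hXsub Sg hSgI hSgd) hGeq⟩
end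

section
/- Under the standing setup, suppose T_f ∪ T_g is a t-intersecting family with τ_t(T_f ∪ T_g) = t, that |T_f| = k−t+1 and |T_g| = ℓ−t+1, and that |M_f ∩ M_g| ≥ t+2 where M_f = ⋃_{A∈T_f} A and M_g = ⋃_{B∈T_g} B. Then there exist X ⊆ [t+1,n] with |X| = k−t+1 and Y ⊆ [t+1,n] with |Y| = ℓ−t+1 with |X∩Y| ≥ 2 such that (F,G) is isomorphic to (H(k,t;X,Y), H'(ℓ,t;Y,X)), where H(k,t;X,Y) = {F ∈ C([n],k) : [t] ⊆ F and |F∩Y| ≥ 1} ∪ {(X∪[t])\{i} : i ∈ [t]} and H'(ℓ,t;Y,X) = {G ∈ C([n],ℓ) : [t] ⊆ G and |G∩X| ≥ 1} ∪ {(Y∪[t])\{i} : i ∈ [t]}. -/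
/-
Let `T` be a `t`-set that `t`-covers `T_f ∪ T_g`. Every cover in `T_f` is `T ∪ {x}` for `x` in a
set `X` disjoint from `T` with `|X| = |T_f| = k - t + 1`; similarly `T_g` gives `Y`, and
`|M_f ∩ M_g| = t + |X ∩ Y|` forces `|X ∩ Y| ≥ 2`. A member of `F` not containing `T` meets each
`T ∪ {x}` in `t` points, so it contains `X` and misses exactly one point of `T`: it is
`(X ∪ T) \ {i}`. Since `τ_t(F) = τ_t(G) = t + 1`, both families have such a member, and
`(Y ∪ T) \ {j} ∈ G` forces every `A ∈ F` with `T ⊆ A` to meet `Y`. So `F` and `G` lie in the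
families `ℋ(k,t;X,Y)`, `ℋ'(ℓ,t;Y,X)` built on the kernel `T` instead of `[t]`; these are cross
`t`-intersecting, so maximality gives equality, and a permutation of `[n]` moving `T` onto `[t]`
finishes the proof.
-/

open Finset

theorem exists_perm_mapsTo_image_eq {α : Type*} [DecidableEq α] {U S T : Finset α}
    (hS : S ⊆ U) (hT : T ⊆ U) (h : #S = #T) :
    ∃ σ : Equiv.Perm α, (∀ x ∈ U, σ x ∈ U) ∧ S.image σ = T := by
  obtain ⟨τ, hτ⟩ := Equiv.Perm.exists_map_finset_eq (S.subtype (· ∈ U)) (T.subtype (· ∈ U))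
    (by rwa [card_subtype, card_subtype, filter_true_of_mem hS, filter_true_of_mem hT])
  refine ⟨Equiv.Perm.ofSubtype τ, fun x hx => ?_, ?_⟩
  · rw [Equiv.Perm.ofSubtype_apply_of_mem τ hx]
    exact (τ _).2
  · refine eq_of_subset_of_card_le (fun y hy => ?_)
      (by rw [card_image_of_injective _ (Equiv.injective _), h])
    obtain ⟨x, hx, rfl⟩ := mem_image.mp hy
    have hτx : τ ⟨x, hS hx⟩ ∈ T.subtype (· ∈ U) := hτ ▸ mem_map_of_mem _ (by simpa using hx)
    rw [Equiv.Perm.ofSubtype_apply_of_mem τ (hS hx)]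
    simpa using hτx

theorem image_eq_self_of_mapsTo {α : Type*} [DecidableEq α] {U : Finset α} {σ : Equiv.Perm α}
    (hσ : ∀ x ∈ U, σ x ∈ U) : U.image σ = U :=
  eq_of_subset_of_card_le (image_subset_iff.mpr hσ) (card_image_of_injective _ σ.injective).ge

section Sunflower

variable {α : Type*} [DecidableEq α]

def petals (T : Finset α) (𝒞 : Finset (Finset α)) : Finset α := 𝒞.biUnion (· \ T)

theorem disjoint_petals (T : Finset α) (𝒞 : Finset (Finset α)) : Disjoint (petals T 𝒞) T :=
  (disjoint_biUnion_left _ _ _).mpr fun _ _ => sdiff_disjoint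

theorem petals_subset {T U : Finset α} {𝒞 : Finset (Finset α)} (h : ∀ C ∈ 𝒞, C ⊆ U) :
    petals T 𝒞 ⊆ U :=
  biUnion_subset.mpr fun C hC => sdiff_subset.trans (h C hC)

variable {T : Finset α} {𝒞 : Finset (Finset α)}

theorem biUnion_id_eq_union_petals (h𝒞 : ∀ C ∈ 𝒞, T ⊆ C) (hne : 𝒞.Nonempty) :
    𝒞.biUnion id = T ∪ petals T 𝒞 := by
  obtain ⟨C₀, hC₀⟩ := hne
  ext x
  simp only [petals, mem_biUnion, id, mem_union, mem_sdiff]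
  constructor
  · rintro ⟨C, hC, hxC⟩
    by_cases hxT : x ∈ T
    · exact .inl hxT
    · exact .inr ⟨C, hC, hxC, hxT⟩
  · rintro (hxT | ⟨C, hC, hxC, -⟩)
    · exact ⟨C₀, hC₀, h𝒞 C₀ hC₀ hxT⟩
    · exact ⟨C, hC, hxC⟩

theorem card_biUnion_inter_biUnion {𝒟 : Finset (Finset α)} (h𝒞 : ∀ C ∈ 𝒞, T ⊆ C)
    (h𝒟 : ∀ D ∈ 𝒟, T ⊆ D) (h𝒞ne : 𝒞.Nonempty) (h𝒟ne : 𝒟.Nonempty) :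
    #(𝒞.biUnion id ∩ 𝒟.biUnion id) = #T + #(petals T 𝒞 ∩ petals T 𝒟) := by
  rw [biUnion_id_eq_union_petals h𝒞 h𝒞ne, biUnion_id_eq_union_petals h𝒟 h𝒟ne,
    ← union_inter_distrib_left, card_union_of_disjoint
      (disjoint_of_subset_right inter_subset_left (disjoint_petals T 𝒞).symm)]

section
variable (h𝒞 : ∀ C ∈ 𝒞, T ⊆ C ∧ #C = #T + 1)
include h𝒞

theorem eq_insert_of_mem_sdiff {C : Finset α} {x : α} (hC : C ∈ 𝒞) (hx : x ∈ C \ T) :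
    C = insert x T := by
  obtain ⟨hxC, hxT⟩ := mem_sdiff.mp hx
  refine (eq_of_subset_of_card_le (insert_subset hxC (h𝒞 C hC).1) ?_).symm
  rw [card_insert_of_notMem hxT, (h𝒞 C hC).2]

theorem insert_mem_of_mem_petals {x : α} (hx : x ∈ petals T 𝒞) : insert x T ∈ 𝒞 := by
  obtain ⟨C, hC, hxC⟩ := mem_biUnion.mp hx
  exact eq_insert_of_mem_sdiff h𝒞 hC hxC ▸ hC

theorem card_petals : #(petals T 𝒞) = #𝒞 := by
  rw [petals, card_biUnion]
  · refine (sum_congr rfl fun C hC => ?_).trans (card_eq_sum_ones 𝒞).symm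
    rw [card_sdiff_of_subset (h𝒞 C hC).1, (h𝒞 C hC).2, Nat.add_sub_cancel_left]
  · intro C hC D hD hCD
    refine disjoint_left.mpr fun x hxC hxD => hCD ?_
    rw [eq_insert_of_mem_sdiff h𝒞 hC hxC, eq_insert_of_mem_sdiff h𝒞 hD hxD]

end

end Sunflower

section Kernel

variable {α : Type*} [DecidableEq α] {T A X Y : Finset α}

theorem subset_of_card_le_card_inter (h : #T ≤ #(T ∩ A)) : T ⊆ A :=
  inter_eq_left.mp (eq_of_subset_of_card_le inter_subset_left h)

theorem mem_and_card_inter_add_one_of_not_subset {x : α} (h : #T ≤ #(insert x T ∩ A))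
    (hTA : ¬T ⊆ A) : x ∈ A ∧ #(T ∩ A) + 1 = #T := by
  have hlt : #(T ∩ A) < #T := lt_of_not_ge (mt subset_of_card_le_card_inter hTA)
  have hxA : x ∈ A := by
    by_contra hxA
    rw [insert_inter_of_notMem hxA] at h
    omega
  refine ⟨hxA, le_antisymm hlt ?_⟩
  rw [insert_inter_of_mem hxA] at h
  exact h.trans (card_insert_le _ _)

-- `A` contains `X` and misses exactly one point `i` of `T`, so `(X ∪ T).erase i ⊆ A`, and the
-- cardinalities agree.
theorem exists_eq_erase_union_of_not_subset (hX : X.Nonempty) (hXT : Disjoint X T)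
    (hA : ∀ x ∈ X, #T ≤ #(insert x T ∩ A)) (hTA : ¬T ⊆ A) (hcard : #A + 1 = #X + #T) :
    ∃ i ∈ T, A = (X ∪ T).erase i := by
  obtain ⟨x₀, hx₀⟩ := hX
  have hTA' := (mem_and_card_inter_add_one_of_not_subset (hA x₀ hx₀) hTA).2
  obtain ⟨i, hi⟩ : ∃ i, T \ A = {i} := by
    have := card_sdiff_add_card_inter T A
    exact card_eq_one.mp (by omega)
  have hiT : i ∈ T := (mem_sdiff.mp (hi ▸ mem_singleton_self i)).1
  refine ⟨i, hiT, (eq_of_subset_of_card_le (fun y hy => ?_) ?_).symm⟩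
  · obtain ⟨hyi, hy⟩ := mem_erase.mp hy
    rcases mem_union.mp hy with hyX | hyT
    · exact (mem_and_card_inter_add_one_of_not_subset (hA y hyX) hTA).1
    · by_contra hyA
      exact hyi (mem_singleton.mp (hi ▸ mem_sdiff.mpr ⟨hyT, hyA⟩))
  · rw [card_erase_of_mem (mem_union_right X hiT), card_union_of_disjoint hXT]
    omega

theorem card_inter_erase_union_add_one (hTA : T ⊆ A) (hYT : Disjoint Y T) {j : α} (hj : j ∈ T) :
    #(A ∩ (Y ∪ T).erase j) + 1 = #(A ∩ Y) + #T := by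
  rw [inter_erase, inter_union_distrib_left, inter_eq_right.mpr hTA,
    card_erase_of_mem (mem_union_right _ hj),
    card_union_of_disjoint (disjoint_of_subset_left inter_subset_right hYT)]
  have : 0 < #T := card_pos.mpr ⟨j, hj⟩
  omega

theorem card_inter_add_le_card_erase_union_inter (hXT : Disjoint X T) (i j : α) :
    #(X ∩ Y) + #T ≤ #((X ∪ T).erase i ∩ (Y ∪ T).erase j) + 2 := by
  rw [erase_inter, inter_erase, ← inter_union_distrib_right,
    ← card_union_of_disjoint (disjoint_of_subset_left inter_subset_left hXT)]
  have h1 := pred_card_le_card_erase (s := (X ∩ Y) ∪ T) (a := j)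
  have h2 := pred_card_le_card_erase (s := ((X ∩ Y) ∪ T).erase j) (a := i)
  omega

end Kernel

theorem crossInt.symm {t : ℕ} {F G : Finset (Finset ℕ)} (h : crossInt t F G) : crossInt t G F :=
  fun B hB A hA => inter_comm A B ▸ h A hA B hB

section FamH

variable {n k l : ℕ} {T X Y : Finset ℕ}

-- `famH n k t X Y` is `famHKernel n k (Iv 1 t) X Y` by definition.
def famHKernel (n k : ℕ) (T X Y : Finset ℕ) : Finset (Finset ℕ) :=
  (ksubsets (Iv 1 n) k).filter (fun A => T ⊆ A ∧ 1 ≤ #(A ∩ Y)) ∪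
  T.image (fun i => (X ∪ T).erase i)

theorem mapFam_famHKernel {σ : Equiv.Perm ℕ} (hσ : permOn n σ) (T X Y : Finset ℕ) :
    mapFam σ (famHKernel n k T X Y) = famHKernel n k (T.image σ) (X.image σ) (Y.image σ) := by
  have hinj := σ.injective
  have hIcc := image_eq_self_of_mapsTo hσ
  rw [famHKernel, famHKernel, mapFam, image_union, image_image, image_image]
  congr 1
  · ext B
    simp only [mem_image, mem_filter, ksubsets, mem_powerset, Iv]
    constructor
    · rintro ⟨A, ⟨⟨hAn, hAk⟩, hTA, hAY⟩, rfl⟩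
      refine ⟨⟨?_, ?_⟩, image_subset_image hTA, ?_⟩
      · rw [← hIcc]; exact image_subset_image hAn
      · rwa [card_image_of_injective _ hinj]
      · rwa [← image_inter _ _ hinj, card_image_of_injective _ hinj]
    · rintro ⟨⟨hBn, hBk⟩, hTB, hBY⟩
      obtain ⟨A, rfl⟩ : ∃ A, A.image σ = B := ⟨B.image σ.symm, by simp [image_image]⟩
      rw [← hIcc, image_subset_image_iff hinj] at hBn
      rw [image_subset_image_iff hinj] at hTB
      rw [← image_inter _ _ hinj, card_image_of_injective _ hinj] at hBY
      exact ⟨A, ⟨⟨hBn, by rwa [card_image_of_injective _ hinj] at hBk⟩, hTB, hBY⟩, rfl⟩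
  · congr 1
    ext i
    simp [image_erase hinj, image_union]

theorem famHKernel_subset_ksubsets (hT : T ⊆ Iv 1 n) (hX : X ⊆ Iv 1 n) (hXT : Disjoint X T)
    (hk : #X + #T = k + 1) : famHKernel n k T X Y ⊆ ksubsets (Iv 1 n) k := by
  refine union_subset (filter_subset _ _) fun A hA => ?_
  obtain ⟨i, hi, rfl⟩ := mem_image.mp hA
  simp only [ksubsets, mem_filter, mem_powerset]
  refine ⟨(erase_subset _ _).trans (union_subset hX hT), ?_⟩
  rw [card_erase_of_mem (mem_union_right X hi), card_union_of_disjoint hXT]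
  omega

theorem crossInt_famHKernel (hXT : Disjoint X T) (hYT : Disjoint Y T) (hXY : 2 ≤ #(X ∩ Y)) :
    crossInt #T (famHKernel n k T X Y) (famHKernel n l T Y X) := by
  intro A hA B hB
  simp only [famHKernel, mem_union, mem_filter, mem_image] at hA hB
  rcases hA with ⟨-, hTA, hAY⟩ | ⟨i, hi, rfl⟩ <;> rcases hB with ⟨-, hTB, hBX⟩ | ⟨j, hj, rfl⟩
  · exact card_le_card (subset_inter hTA hTB)
  · have := card_inter_erase_union_add_one hTA hYT hj
    omega
  · have := card_inter_erase_union_add_one hTB hXT hi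
    rw [inter_comm] at this
    omega
  · have := card_inter_add_le_card_erase_union_inter (Y := Y) hXT i j
    omega

end FamH

section Covers

variable {n t : ℕ} {F : Finset (Finset ℕ)} {T : Finset ℕ}

theorem exists_tCover_of_tau_eq {c : ℕ} (h : tau n t F = c) (hc : 0 < c) :
    ∃ T ⊆ Icc 1 n, #T = c ∧ ∀ A ∈ F, t ≤ #(T ∩ A) := by
  have hne : {c : ℕ | ∃ T ⊆ Icc 1 n, #T = c ∧ ∀ A ∈ F, t ≤ #(T ∩ A)}.Nonempty := by
    by_contra hemp
    rw [tau, Set.not_nonempty_iff_eq_empty.mp hemp, Nat.sInf_empty] at h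
    omega
  exact h ▸ Nat.sInf_mem hne

theorem exists_kernel_of_tau_eq (h : tau n t F = t) (ht : 0 < t) :
    ∃ T ⊆ Icc 1 n, #T = t ∧ ∀ C ∈ F, T ⊆ C := by
  obtain ⟨T, hTn, hTt, hT⟩ := exists_tCover_of_tau_eq h ht
  exact ⟨T, hTn, hTt, fun C hC => subset_of_card_le_card_inter (hTt ▸ hT C hC)⟩

theorem tau_le_card (hT : T ⊆ Icc 1 n) (hcov : ∀ A ∈ F, t ≤ #(T ∩ A)) : tau n t F ≤ #T :=
  Nat.sInf_le ⟨T, hT, rfl, hcov⟩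

theorem exists_not_subset_of_tau_eq_succ (hT : T ⊆ Icc 1 n) (hTt : #T = t)
    (hF : tau n t F = t + 1) : ∃ A ∈ F, ¬T ⊆ A := by
  by_contra! hsub
  have := tau_le_card hT fun A hA => (inter_eq_left.mpr (hsub A hA)).symm ▸ hTt.ge
  omega

theorem mem_covers {C : Finset ℕ} :
    C ∈ covers n t F ↔ C ⊆ Icc 1 n ∧ #C = t + 1 ∧ ∀ A ∈ F, t ≤ #(C ∩ A) := by
  simp [covers]

theorem petals_covers_subset : petals T (covers n t F) ⊆ Icc 1 n :=
  petals_subset fun _ hC => (mem_covers.mp hC).1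

theorem covers_sunflower (hTt : #T = t) (hTC : ∀ C ∈ covers n t F, T ⊆ C) :
    ∀ C ∈ covers n t F, T ⊆ C ∧ #C = #T + 1 :=
  fun C hC => ⟨hTC C hC, hTt ▸ (mem_covers.mp hC).2.1⟩

variable {k : ℕ} (hF : F ⊆ ksubsets (Iv 1 n) k) (hTt : #T = t)
  (hTC : ∀ C ∈ covers n t F, T ⊆ C) (hk : t ≤ k) (hcard : #(covers n t F) + t = k + 1)
include hF hTt hTC hk hcard

theorem eq_erase_union_petals_of_not_subset {A : Finset ℕ} (hA : A ∈ F) (hTA : ¬T ⊆ A) :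
    ∃ i ∈ T, A = (petals T (covers n t F) ∪ T).erase i := by
  have hcov := covers_sunflower hTt hTC
  refine exists_eq_erase_union_of_not_subset ?_ (disjoint_petals _ _) (fun x hx => ?_) hTA ?_
  · rw [← card_pos, card_petals hcov]
    omega
  · exact hTt ▸ (mem_covers.mp (insert_mem_of_mem_petals hcov hx)).2.2 A hA
  · rw [card_petals hcov, hTt, (mem_filter.mp (hF hA)).2]
    omega

theorem exists_erase_union_petals_mem (hTn : T ⊆ Icc 1 n) (htF : tau n t F = t + 1) :
    ∃ i ∈ T, (petals T (covers n t F) ∪ T).erase i ∈ F := by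
  obtain ⟨A, hA, hTA⟩ := exists_not_subset_of_tau_eq_succ hTn hTt htF
  obtain ⟨i, hi, rfl⟩ := eq_erase_union_petals_of_not_subset hF hTt hTC hk hcard hA hTA
  exact ⟨i, hi, hA⟩

theorem subset_famHKernel {G : Finset (Finset ℕ)} {Y : Finset ℕ} (hFG : crossInt t F G)
    (hYT : Disjoint Y T) {j : ℕ} (hj : j ∈ T) (hB : (Y ∪ T).erase j ∈ G) :
    F ⊆ famHKernel n k T (petals T (covers n t F)) Y := by
  intro A hA
  by_cases hTA : T ⊆ A
  · refine mem_union_left _ (mem_filter.mpr ⟨hF hA, hTA, ?_⟩)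
    have := card_inter_erase_union_add_one hTA hYT hj
    have := hFG A hA _ hB
    omega
  · obtain ⟨i, hi, rfl⟩ := eq_erase_union_petals_of_not_subset hF hTt hTC hk hcard hA hTA
    exact mem_union_right _ (mem_image_of_mem _ hi)

end Covers

theorem eq_famHKernel_of_maximalCrossIn {n k l t : ℕ} {F G : Finset (Finset ℕ)} {T : Finset ℕ}
    (hmax : maximalCrossIn (Iv 1 n) k l t F G) (htF : tau n t F = t + 1)
    (htG : tau n t G = t + 1) (hTn : T ⊆ Icc 1 n) (hTt : #T = t)
    (hTF : ∀ C ∈ covers n t F, T ⊆ C) (hTG : ∀ C ∈ covers n t G, T ⊆ C) (hk : t ≤ k) (hl : t ≤ l)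
    (hcf : #(covers n t F) + t = k + 1) (hcg : #(covers n t G) + t = l + 1)
    (hXY : 2 ≤ #(petals T (covers n t F) ∩ petals T (covers n t G))) :
    F = famHKernel n k T (petals T (covers n t F)) (petals T (covers n t G)) ∧
      G = famHKernel n l T (petals T (covers n t G)) (petals T (covers n t F)) := by
  obtain ⟨hF, hG, hFG, hmaxFG⟩ := hmax
  obtain ⟨i, hi, hAF⟩ := exists_erase_union_petals_mem hF hTt hTF hk hcf hTn htF
  obtain ⟨j, hj, hBG⟩ := exists_erase_union_petals_mem hG hTt hTG hl hcg hTn htG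
  have hcross := crossInt_famHKernel (n := n) (k := k) (l := l) (disjoint_petals T (covers n t F))
    (disjoint_petals T (covers n t G)) hXY
  rw [hTt] at hcross
  refine hmaxFG _ _ (famHKernel_subset_ksubsets hTn petals_covers_subset (disjoint_petals _ _) ?_)
    (famHKernel_subset_ksubsets hTn petals_covers_subset (disjoint_petals _ _) ?_) hcross
    (subset_famHKernel hF hTt hTF hk hcf hFG (disjoint_petals _ _) hj hBG)
    (subset_famHKernel hG hTt hTG hl hcg hFG.symm (disjoint_petals _ _) hi hAF)
  · rw [card_petals (covers_sunflower hTt hTF)]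
    omega
  · rw [card_petals (covers_sunflower hTt hTG)]
    omega

theorem exists_perm_image_eq_Icc {n t : ℕ} {T : Finset ℕ} (hTn : T ⊆ Icc 1 n) (hTt : #T = t) :
    ∃ σ : Equiv.Perm ℕ, permOn n σ ∧ T.image σ = Icc 1 t := by
  have htn : t ≤ n := by simpa [hTt] using card_le_card hTn
  exact exists_perm_mapsTo_image_eq hTn (Icc_subset_Icc_right htn) (by simp [hTt])

theorem image_subset_Icc_succ_of_disjoint {n t : ℕ} {σ : Equiv.Perm ℕ} (hσ : permOn n σ)
    {T X : Finset ℕ} (hX : X ⊆ Icc 1 n) (hXT : Disjoint X T) (hσT : T.image σ = Icc 1 t) :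
    X.image σ ⊆ Icc (t + 1) n := by
  intro y hy
  obtain ⟨x, hx, rfl⟩ := mem_image.mp hy
  have hxn := mem_Icc.mp (hσ x (hX hx))
  have hxt : σ x ∉ Icc 1 t := by
    rw [← hσT, mem_image]
    rintro ⟨x', hx', hxx'⟩
    exact disjoint_left.mp hXT hx (σ.injective hxx' ▸ hx')
  rw [mem_Icc] at hxt ⊢
  omega

theorem covers_union_t_intersecting_extremal_H_general
    (n k l t : ℕ) (ht0 : 0 < t) (hk : t + 1 ≤ k) (hl : t + 1 ≤ l)
    (F G : Finset (Finset ℕ))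
    (hmax : maximalCrossIn (Iv 1 n) k l t F G)
    (htF : tau n t F = t + 1) (htG : tau n t G = t + 1)
    (htau : tau n t (covers n t F ∪ covers n t G) = t)
    (hcf : (covers n t F).card = k - t + 1)
    (hcg : (covers n t G).card = l - t + 1)
    (hM : t + 2 ≤ (((covers n t F).biUnion id) ∩ ((covers n t G).biUnion id)).card) :
    ∃ X Y : Finset ℕ, X ⊆ Iv (t+1) n ∧ X.card = k - t + 1 ∧
      Y ⊆ Iv (t+1) n ∧ Y.card = l - t + 1 ∧ 2 ≤ (X ∩ Y).card ∧
      isoPair n F G (famH n k t X Y) (famH n l t Y X) := by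
  obtain ⟨T, hTn, hTt, hT⟩ := exists_kernel_of_tau_eq htau ht0
  have hTF : ∀ C ∈ covers n t F, T ⊆ C := fun C hC => hT C (mem_union_left _ hC)
  have hTG : ∀ C ∈ covers n t G, T ⊆ C := fun C hC => hT C (mem_union_right _ hC)
  set X := petals T (covers n t F)
  set Y := petals T (covers n t G)
  have hXcard : #X = k - t + 1 := (card_petals (covers_sunflower hTt hTF)).trans hcf
  have hYcard : #Y = l - t + 1 := (card_petals (covers_sunflower hTt hTG)).trans hcg
  have hXY : 2 ≤ #(X ∩ Y) := by
    have : #((covers n t F).biUnion id ∩ (covers n t G).biUnion id) = #T + #(X ∩ Y) :=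
      card_biUnion_inter_biUnion hTF hTG (card_pos.mp (by omega)) (card_pos.mp (by omega))
    omega
  obtain ⟨hFH, hGH⟩ := eq_famHKernel_of_maximalCrossIn hmax htF htG hTn hTt hTF hTG
    (by omega) (by omega) (by omega) (by omega) hXY
  obtain ⟨σ, hσ, hσT⟩ := exists_perm_image_eq_Icc hTn hTt
  refine ⟨X.image σ, Y.image σ,
    image_subset_Icc_succ_of_disjoint hσ petals_covers_subset (disjoint_petals _ _) hσT,
    by rw [card_image_of_injective _ σ.injective, hXcard],
    image_subset_Icc_succ_of_disjoint hσ petals_covers_subset (disjoint_petals _ _) hσT,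
    by rw [card_image_of_injective _ σ.injective, hYcard],
    by rwa [← image_inter _ _ σ.injective, card_image_of_injective _ σ.injective],
    σ, hσ, ?_, ?_⟩
  · rw [hFH, mapFam_famHKernel hσ, hσT]
    rfl
  · rw [hGH, mapFam_famHKernel hσ, hσT]
    rfl

/-- Lemma 2.4(iib). -/
theorem covers_union_t_intersecting_extremal_H
    (n k l t : ℕ) (hn0 : 0 < n) (ht0 : 0 < t) (hk : t + 1 ≤ k) (hl : t + 1 ≤ l)
    (hn : (t+1)^2 * (k+l)^2 * (k - t + 1) * (l - t + 1) + k + l - t ≤ n)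
    (F G : Finset (Finset ℕ))
    (hmax : maximalCrossIn (Iv 1 n) k l t F G)
    (htF : tau n t F = t + 1) (htG : tau n t G = t + 1)
    (hint : crossInt t (covers n t F ∪ covers n t G) (covers n t F ∪ covers n t G))
    (htau : tau n t (covers n t F ∪ covers n t G) = t)
    (hcf : (covers n t F).card = k - t + 1)
    (hcg : (covers n t G).card = l - t + 1)
    (hM : t + 2 ≤ (((covers n t F).biUnion id) ∩ ((covers n t G).biUnion id)).card) :
    ∃ X Y : Finset ℕ, X ⊆ Iv (t+1) n ∧ X.card = k - t + 1 ∧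
      Y ⊆ Iv (t+1) n ∧ Y.card = l - t + 1 ∧ 2 ≤ (X ∩ Y).card ∧
      isoPair n F G (famH n k t X Y) (famH n l t Y X) :=
  covers_union_t_intersecting_extremal_H_general n k l t ht0 hk hl F G hmax htF htG htau hcf hcg hM
end

section
/- Under the standing setup, suppose T_f ∪ T_g is a t-intersecting family with τ_t(T_f ∪ T_g) = t+1. Then max{|T_f|, |T_g|} ≤ t+2. Moreover, if |T_f| = |T_g| = t+2, then (F,G) is isomorphic to (A(k,t), A(ℓ,t)), where A(k,t) = {F ∈ C([n],k) : |F∩[t+2]| ≥ t+1}. -/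
section Aux
open Finset

open Finset

lemma perm_exists (Z W : Finset ℕ) (h : Z.card = W.card) :
    ∃ σ : Equiv.Perm ℕ, (∀ x, x ∉ Z ∪ W → σ x = x) ∧ Z.image σ = W := by
  classical
  induction Z using Finset.induction_on generalizing W with
  | empty =>
    have : W = ∅ := by
      have := h.symm; simpa [Finset.card_eq_zero] using this
    exact ⟨Equiv.refl ℕ, by simp, by simp [this]⟩
  | @insert a s ha ih =>
    have hWc : W.card = s.card + 1 := by
      rw [← h, Finset.card_insert_of_notMem ha]
    have hWne : W.Nonempty := by
      rw [← Finset.card_pos, hWc]; omega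
    obtain ⟨w, hw⟩ := hWne
    have hcard : s.card = (W.erase w).card := by
      rw [Finset.card_erase_of_mem hw, hWc]
      omega
    obtain ⟨σ', hfix', himg'⟩ := ih (W.erase w) hcard
    have hsa : σ' a ∉ W.erase w := by
      intro hmem
      rw [← himg'] at hmem
      obtain ⟨b, hb, hbe⟩ := Finset.mem_image.mp hmem
      exact ha (σ'.injective hbe ▸ hb)
    refine ⟨σ'.trans (Equiv.swap (σ' a) w), ?_, ?_⟩
    · intro x hx
      simp only [Finset.mem_union, Finset.mem_insert, not_or] at hx
      have hxs : σ' x = x := by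
        apply hfix'
        simp only [Finset.mem_union, Finset.mem_erase, not_or]
        tauto
      simp only [Equiv.trans_apply, hxs]
      rw [Equiv.swap_apply_of_ne_of_ne]
      · intro he; exact hx.1.1 (σ'.injective (hxs.trans he))
      · intro he; exact hx.2 (he ▸ hw)
    · rw [Finset.image_insert]
      have h1 : ∀ x ∈ s, (σ'.trans (Equiv.swap (σ' a) w)) x = σ' x := by
        intro x hx
        simp only [Equiv.trans_apply]
        apply Equiv.swap_apply_of_ne_of_ne
        · intro he; exact ha (σ'.injective he ▸ hx)
        · intro he
          have : σ' x ∈ W.erase w := himg' ▸ Finset.mem_image_of_mem σ' hx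
          rw [he] at this; exact (Finset.notMem_erase w W) this
      have h2 : s.image (σ'.trans (Equiv.swap (σ' a) w)) = W.erase w := by
        rw [Finset.image_congr (fun x hx => h1 x hx), himg']
      have h3 : (σ'.trans (Equiv.swap (σ' a) w)) a = w := by
        simp [Equiv.trans_apply, Equiv.swap_apply_left]
      rw [h3, h2, Finset.insert_erase hw]

lemma perm_maps (σ : Equiv.Perm ℕ) (V : Finset ℕ) (hfix : ∀ x, x ∉ V → σ x = x) :
    ∀ x ∈ V, σ x ∈ V := by
  intro x hx
  by_contra hnx
  have h1 := hfix (σ x) hnx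
  have h2 : σ x = x := σ.injective h1
  rw [h2] at hnx
  exact hnx hx


lemma exists_Z (t : ℕ) (ht : 0 < t) (S : Finset ℕ) (U : Finset (Finset ℕ))
    (hS : t + 2 ≤ S.card)
    (hmem : ∀ T ∈ U, T ⊆ S ∧ T.card = t + 1)
    (hint : ∀ T1 ∈ U, ∀ T2 ∈ U, t ≤ (T1 ∩ T2).card)
    (hno : ¬ ∃ T : Finset ℕ, T ⊆ S ∧ T.card = t ∧ ∀ A ∈ U, t ≤ (T ∩ A).card) :
    ∃ Z : Finset ℕ, Z ⊆ S ∧ Z.card = t + 2 ∧ ∀ T ∈ U, T ⊆ Z := by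
  classical
  by_cases hd : ∃ T1 ∈ U, ∃ T2 ∈ U, T1 ≠ T2
  · obtain ⟨T1, hT1, T2, hT2, hne⟩ := hd
    obtain ⟨hT1S, hT1c⟩ := hmem T1 hT1
    obtain ⟨hT2S, hT2c⟩ := hmem T2 hT2
    have hD : (T1 ∩ T2).card = t := by
      have hle : (T1 ∩ T2).card ≤ t + 1 := hT1c ▸ card_le_card (inter_subset_left)
      have hge := hint T1 hT1 T2 hT2
      rcases Nat.lt_or_ge (T1 ∩ T2).card (t+1) with h | h
      · omega
      · exfalso
        have h1 : T1 ∩ T2 = T1 :=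
          eq_of_subset_of_card_le inter_subset_left (by omega)
        have h2 : T1 ⊆ T2 := by rw [← h1]; exact inter_subset_right
        exact hne (eq_of_subset_of_card_le h2 (by omega))
    set Z := T1 ∪ T2 with hZ
    have hZc : Z.card = t + 2 := by
      rw [hZ]
      have := card_union_add_card_inter T1 T2
      omega
    refine ⟨Z, union_subset hT1S hT2S, hZc, ?_⟩
    by_contra hbad
    push_neg at hbad
    -- key claim
    have key : ∀ T ∈ U, ¬ T ⊆ Z → T ∩ Z = T1 ∩ T2 := by
      intro T hT hTZ
      obtain ⟨hTS, hTc⟩ := hmem T hT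
      obtain ⟨y, hyT, hyZ⟩ := not_subset.mp hTZ
      have hTZe : T ∩ Z ⊆ T.erase y := by
        intro x hx
        rw [mem_erase]
        refine ⟨?_, (mem_inter.mp hx).1⟩
        intro he; exact hyZ (he ▸ (mem_inter.mp hx).2)
      have hTZc : (T ∩ Z).card ≤ t := by
        have := card_le_card hTZe
        rw [card_erase_of_mem hyT, hTc] at this
        omega
      have hs1 : T ∩ T1 ⊆ T ∩ Z := inter_subset_inter Subset.rfl subset_union_left
      have hs2 : T ∩ T2 ⊆ T ∩ Z := inter_subset_inter Subset.rfl subset_union_right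
      have h1 := hint T hT T1 hT1
      have h2 := hint T hT T2 hT2
      have he1 : T ∩ T1 = T ∩ Z :=
        eq_of_subset_of_card_le hs1 (le_trans hTZc h1)
      have he2 : T ∩ T2 = T ∩ Z :=
        eq_of_subset_of_card_le hs2 (le_trans hTZc h2)
      have hsub : T ∩ Z ⊆ T1 ∩ T2 := by
        intro x hx
        rw [mem_inter]
        constructor
        · exact (mem_inter.mp (he1 ▸ hx)).2
        · exact (mem_inter.mp (he2 ▸ hx)).2
      have hle' : t ≤ (T ∩ Z).card := le_trans h1 (card_le_card hs1)
      exact eq_of_subset_of_card_le hsub (by omega)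
    obtain ⟨T3, hT3U, hT3Z⟩ := hbad
    have hT3 : T3 ∩ Z = T1 ∩ T2 := key T3 hT3U hT3Z
    apply hno
    refine ⟨T1 ∩ T2, (inter_subset_left).trans hT1S, hD, ?_⟩
    intro A hA
    suffices hsuf : T1 ∩ T2 ⊆ A by
      have : T1 ∩ T2 ∩ A = T1 ∩ T2 := inter_eq_left.mpr hsuf
      rw [this, hD]
    by_cases hAZ : A ⊆ Z
    · have hAT3 : t ≤ (A ∩ T3).card := hint A hA T3 hT3U
      have hsub : A ∩ T3 ⊆ T1 ∩ T2 := by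
        intro x hx
        rw [mem_inter] at hx
        rw [← hT3, mem_inter]
        exact ⟨hx.2, hAZ hx.1⟩
      have : A ∩ T3 = T1 ∩ T2 := eq_of_subset_of_card_le hsub (by omega)
      rw [← this]
      exact inter_subset_left
    · rw [← key A hA hAZ]
      exact inter_subset_left
  · push_neg at hd
    rcases U.eq_empty_or_nonempty with h | ⟨T0, hT0⟩
    · obtain ⟨Z, hZS, hZc⟩ := exists_subset_card_eq hS
      exact ⟨Z, hZS, hZc, by simp [h]⟩
    · obtain ⟨hT0S, hT0c⟩ := hmem T0 hT0
      obtain ⟨Z, hTZ, hZS, hZc⟩ :=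
        exists_subsuperset_card_eq hT0S (by omega) hS
      refine ⟨Z, hZS, hZc, ?_⟩
      intro T hT
      rw [hd T hT T0 hT0]
      exact hTZ

lemma image_filter_eq (σ : Equiv.Perm ℕ) (S Z W : Finset ℕ) (k t : ℕ)
    (hSS : ∀ x ∈ S, σ x ∈ S) (hZW : Z.image σ = W) :
    ((ksubsets S k).filter (fun A => t+1 ≤ (A ∩ Z).card)).image (fun A => A.image σ)
      = (ksubsets S k).filter (fun A => t+1 ≤ (A ∩ W).card) := by
  classical
  have hinj : Function.Injective σ := σ.injective
  have hSim : S.image σ = S := by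
    apply eq_of_subset_of_card_le
    · intro x hx
      obtain ⟨a, ha, rfl⟩ := mem_image.mp hx
      exact hSS a ha
    · rw [card_image_of_injective _ hinj]
  have hSsym : S.image σ.symm = S := by
    have := congrArg (fun s => s.image σ.symm) hSim
    simp only [image_image] at this
    rw [← this]
    have : (σ.symm : ℕ → ℕ) ∘ (σ : ℕ → ℕ) = id := by
      funext x; simp
    rw [this, image_id]
  have hWsym : W.image σ.symm = Z := by
    have := congrArg (fun s => s.image σ.symm) hZW
    simp only [image_image] at this
    rw [← this]
    have h : (σ.symm : ℕ → ℕ) ∘ (σ : ℕ → ℕ) = id := by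
      funext x; simp
    rw [h, image_id]
  ext B
  simp only [mem_image, mem_filter, ksubsets, mem_powerset]
  constructor
  · rintro ⟨A, ⟨⟨hAS, hAk⟩, hAZ⟩, rfl⟩
    refine ⟨⟨?_, ?_⟩, ?_⟩
    · intro x hx
      obtain ⟨a, ha, rfl⟩ := mem_image.mp hx
      exact hSS a (hAS ha)
    · rw [card_image_of_injective _ hinj]; exact hAk
    · rw [← hZW, ← image_inter _ _ hinj, card_image_of_injective _ hinj]
      exact hAZ
  · rintro ⟨⟨hBS, hBk⟩, hBW⟩
    refine ⟨B.image σ.symm, ⟨⟨?_, ?_⟩, ?_⟩, ?_⟩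
    · intro x hx
      obtain ⟨b, hb, rfl⟩ := mem_image.mp hx
      rw [← hSsym]
      exact mem_image_of_mem _ (hBS hb)
    · rw [card_image_of_injective _ σ.symm.injective]; exact hBk
    · rw [← hWsym, ← image_inter _ _ σ.symm.injective,
        card_image_of_injective _ σ.symm.injective]
      exact hBW
    · rw [image_image]
      have h : (σ : ℕ → ℕ) ∘ (σ.symm : ℕ → ℕ) = id := by
        funext x; simp
      rw [h, image_id]

end Aux

def azfam (n t : ℕ) (Z : Finset ℕ) (m : ℕ) : Finset (Finset ℕ) :=
  (ksubsets (Finset.Icc 1 n) m).filter (fun A => t + 1 ≤ (A ∩ Z).card)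

lemma mem_azfam {n t : ℕ} {Z : Finset ℕ} {m : ℕ} {A : Finset ℕ} :
    A ∈ azfam n t Z m ↔ A ⊆ Finset.Icc 1 n ∧ A.card = m ∧ t + 1 ≤ (A ∩ Z).card := by
  simp only [azfam, ksubsets, Finset.mem_filter, Finset.mem_powerset]
  tauto

/-- Lemma 2.5. -/
theorem covers_union_t_intersecting_tau_succ
    (n k l t : ℕ) (hn0 : 0 < n) (ht0 : 0 < t) (hk : t + 1 ≤ k) (hl : t + 1 ≤ l)
    (hn : (t+1)^2 * (k+l)^2 * (k - t + 1) * (l - t + 1) + k + l - t ≤ n)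
    (F G : Finset (Finset ℕ))
    (hmax : maximalCrossIn (Iv 1 n) k l t F G)
    (htF : tau n t F = t + 1) (htG : tau n t G = t + 1)
    (hint : crossInt t (covers n t F ∪ covers n t G) (covers n t F ∪ covers n t G))
    (htau : tau n t (covers n t F ∪ covers n t G) = t + 1) :
    (covers n t F).card ≤ t + 2 ∧ (covers n t G).card ≤ t + 2 ∧
    ((covers n t F).card = t + 2 → (covers n t G).card = t + 2 →
      isoPair n F G (famA n k t) (famA n l t)) := by
  classical
  have hmemU : ∀ T ∈ covers n t F ∪ covers n t G,
      T ⊆ Finset.Icc 1 n ∧ T.card = t + 1 := by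
    intro T hT
    rcases Finset.mem_union.mp hT with h | h <;>
      (simp only [covers, Finset.mem_filter, Finset.mem_powerset] at h; exact ⟨h.1, h.2.1⟩)
  have hn2 : t + 2 ≤ n := by
    have h1 : k + l ≤ (t+1)^2 * (k+l)^2 * (k - t + 1) * (l - t + 1) + k + l := by
      have := Nat.le_add_left (k + l) ((t+1)^2 * (k+l)^2 * (k - t + 1) * (l - t + 1))
      omega
    have h2 : k + l - t ≤ n := le_trans (Nat.sub_le_sub_right h1 t) hn
    omega
  have hScard : (Finset.Icc 1 n).card = n := by
    rw [Nat.card_Icc]; omega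
  have hno : ¬ ∃ T : Finset ℕ, T ⊆ Finset.Icc 1 n ∧ T.card = t ∧
      ∀ A ∈ covers n t F ∪ covers n t G, t ≤ (T ∩ A).card := by
    rintro ⟨T, h1, h2, h3⟩
    have hle : tau n t (covers n t F ∪ covers n t G) ≤ t :=
      Nat.sInf_le ⟨T, h1, h2, h3⟩
    omega
  obtain ⟨Z, hZS, hZcard, hZall⟩ :=
    exists_Z t ht0 (Finset.Icc 1 n) (covers n t F ∪ covers n t G)
      (by rw [hScard]; exact hn2) hmemU hint hno
  have hpow : covers n t F ∪ covers n t G ⊆ Z.powersetCard (t+1) := by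
    intro T hT
    exact Finset.mem_powersetCard.mpr ⟨hZall T hT, (hmemU T hT).2⟩
  have hpc : (Z.powersetCard (t+1)).card = t + 2 := by
    rw [Finset.card_powersetCard, hZcard]
    exact Nat.choose_succ_self_right (t+1)
  have hbF : (covers n t F).card ≤ t + 2 := by
    have := Finset.card_le_card ((Finset.subset_union_left).trans hpow)
    omega
  have hbG : (covers n t G).card ≤ t + 2 := by
    have := Finset.card_le_card ((Finset.subset_union_right).trans hpow)
    omega
  refine ⟨hbF, hbG, ?_⟩
  intro hF2 hG2
  have hFeq : covers n t F = Z.powersetCard (t+1) :=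
    Finset.eq_of_subset_of_card_le ((Finset.subset_union_left).trans hpow) (by omega)
  have hGeq : covers n t G = Z.powersetCard (t+1) :=
    Finset.eq_of_subset_of_card_le ((Finset.subset_union_right).trans hpow) (by omega)
  -- every member of F (resp. G) meets Z in at least t+1 elements
  have hchar : ∀ (H : Finset (Finset ℕ)), covers n t H = Z.powersetCard (t+1) →
      ∀ A ∈ H, t + 1 ≤ (A ∩ Z).card := by
    intro H hHeq A hA
    by_contra hc
    push_neg at hc
    have hcov : ∀ x ∈ Z, t ≤ ((Z.erase x) ∩ A).card := by
      intro x hx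
      have hmem : Z.erase x ∈ covers n t H := by
        rw [hHeq, Finset.mem_powersetCard]
        exact ⟨Finset.erase_subset _ _, by rw [Finset.card_erase_of_mem hx, hZcard]; omega⟩
      simp only [covers, Finset.mem_filter] at hmem
      exact hmem.2.2 A hA
    rcases (A ∩ Z).eq_empty_or_nonempty with he | ⟨x, hx⟩
    · have hZne : Z.Nonempty := Finset.card_pos.mp (by omega)
      obtain ⟨x, hx⟩ := hZne
      have h1 := hcov x hx
      have h2 : (Z.erase x) ∩ A ⊆ A ∩ Z := by
        intro y hy
        rw [Finset.mem_inter] at hy ⊢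
        exact ⟨hy.2, Finset.mem_of_mem_erase hy.1⟩
      have h3 := Finset.card_le_card h2
      rw [he] at h3
      simp only [Finset.card_empty, Nat.le_zero] at h3
      omega
    · have h1 := hcov x (Finset.mem_inter.mp hx).2
      have h2 : (Z.erase x) ∩ A ⊆ (A ∩ Z).erase x := by
        intro y hy
        rw [Finset.mem_inter] at hy
        rw [Finset.mem_erase] at hy ⊢
        rw [Finset.mem_inter]
        exact ⟨hy.1.1, hy.2, hy.1.2⟩
      have h3 := Finset.card_le_card h2
      rw [Finset.card_erase_of_mem hx] at h3
      omega
  have hFsub : F ⊆ azfam n t Z k := by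
    intro A hA
    have hks := hmax.1 hA
    simp only [ksubsets, Iv, Finset.mem_filter, Finset.mem_powerset] at hks
    exact mem_azfam.mpr ⟨hks.1, hks.2, hchar F hFeq A hA⟩
  have hGsub : G ⊆ azfam n t Z l := by
    intro A hA
    have hks := hmax.2.1 hA
    simp only [ksubsets, Iv, Finset.mem_filter, Finset.mem_powerset] at hks
    exact mem_azfam.mpr ⟨hks.1, hks.2, hchar G hGeq A hA⟩
  have hcross : crossInt t (azfam n t Z k) (azfam n t Z l) := by
    intro A hA B hB
    obtain ⟨-, -, hAZ⟩ := mem_azfam.mp hA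
    obtain ⟨-, -, hBZ⟩ := mem_azfam.mp hB
    have h1 := Finset.card_union_add_card_inter (A ∩ Z) (B ∩ Z)
    have h2 : (A ∩ Z) ∪ (B ∩ Z) ⊆ Z :=
      Finset.union_subset Finset.inter_subset_right Finset.inter_subset_right
    have h3 := Finset.card_le_card h2
    have h4 : (A ∩ Z) ∩ (B ∩ Z) ⊆ A ∩ B := by
      intro y hy
      simp only [Finset.mem_inter] at hy ⊢
      tauto
    have h5 := Finset.card_le_card h4
    omega
  obtain ⟨hFG1, hFG2⟩ := hmax.2.2.2 (azfam n t Z k) (azfam n t Z l)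
    (Finset.filter_subset _ _) (Finset.filter_subset _ _) hcross hFsub hGsub
  -- construct the permutation
  have hWcard : Z.card = (Finset.Icc 1 (t+2)).card := by
    rw [hZcard, Nat.card_Icc]
    omega
  obtain ⟨σ, hfix, himg⟩ := perm_exists Z (Finset.Icc 1 (t+2)) hWcard
  have hWS : Finset.Icc 1 (t+2) ⊆ Finset.Icc 1 n := Finset.Icc_subset_Icc_right hn2
  have hSS : ∀ x ∈ Finset.Icc 1 n, σ x ∈ Finset.Icc 1 n := by
    intro x hx
    by_cases hv : x ∈ Z ∪ Finset.Icc 1 (t+2)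
    · exact (Finset.union_subset hZS hWS) (perm_maps σ _ hfix x hv)
    · rw [hfix x hv]; exact hx
  refine ⟨σ, hSS, ?_, ?_⟩
  · rw [hFG1]
    have := image_filter_eq σ (Finset.Icc 1 n) Z (Finset.Icc 1 (t+2)) k t hSS himg
    simpa [mapFam, azfam, famA, Iv] using this
  · rw [hFG2]
    have := image_filter_eq σ (Finset.Icc 1 n) Z (Finset.Icc 1 (t+2)) l t hSS himg
    simpa [mapFam, azfam, famA, Iv] using this
end
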